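/- arXiv:2401.01800 — 5 statements merged into one kernel-verified Lean document; each statement's English description precedes it below -/
import Mathlib

section
/- Theorem (Bollobás–Thomason): For every ε ∈ (0,1/2) there exists a constant K = K(ε) > 0, depending only on ε, such that for every N ∈ ℕ, every nontrivial monotone property F ⊆ {0,1}^N, and all p, p' ∈ [0,1]: if μ_p(F) ≥ ε and p' ≥ min(1, K·p), then μ_{p'}(F) ≥ 1 − ε. -/
open Finset

/-- The number of coordinates of `x ∈ {0,1}^N` equal to `1`. -/
def wt {N : ℕ} (x : Fin N → Bool) : ℕ := (Finset.univ.filter (fun i => x i = true)).card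

open Classical in
/-- The probability of the property `F ⊆ {0,1}^N` under the product measure `μ_p`
in which each coordinate is `1` independently with probability `p`. -/
noncomputable def mu (N : ℕ) (p : ℝ) (F : Set (Fin N → Bool)) : ℝ :=
  ∑ x : Fin N → Bool,
    if x ∈ F then p ^ wt x * (1 - p) ^ (N - wt x) else 0

/-- A property `F ⊆ {0,1}^N` is monotone if it is closed upwards in the
coordinatewise order. -/
def MonotoneProp {N : ℕ} (F : Set (Fin N → Bool)) : Prop :=
  ∀ x y : Fin N → Bool, x ∈ F → x ≤ y → y ∈ F

/-!
The coordinatewise `or` of independent samples of `μ_p` and `μ_q` is a sample of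
`μ_{p+q-pq}`. If `F` is monotone, the `or` of two points lies outside `F` only if both do,
so `1 - μ_{p+q-pq}(F) ≤ (1 - μ_p(F)) (1 - μ_q(F))`, and by iteration
`1 - μ_{1-(1-p)^m}(F) ≤ (1 - μ_p(F))^m`. Take `m` with `(1 - ε)^m ≤ ε` and `K = m`:
Bernoulli's inequality `1 - (1-p)^m ≤ m p` and monotonicity of `μ_p(F)` in `p` finish the proof.
-/

lemma IsUpperSet.monotone_indicator_one {α : Type*} [Preorder α] {s : Set α}
    (hs : IsUpperSet s) : Monotone (s.indicator (1 : α → ℝ)) := by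
  intro x y hxy
  by_cases hx : x ∈ s
  · simp [hx, hs hxy hx]
  · simp [hx, Set.indicator_nonneg]

lemma IsLowerSet.indicator_one_sup_le {α : Type*} [SemilatticeSup α] {s : Set α}
    (hs : IsLowerSet s) (x y : α) :
    s.indicator (1 : α → ℝ) (x ⊔ y) ≤ s.indicator 1 x * s.indicator 1 y := by
  by_cases hxy : x ⊔ y ∈ s
  · simp [hxy, hs le_sup_left hxy, hs le_sup_right hxy]
  · simp [hxy, Set.indicator_nonneg, mul_nonneg]

namespace BollobasThomason

lemma sum_comp_mul_prod {ι α β R : Type*} [Fintype ι] [DecidableEq ι] [Fintype α] [Fintype β]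
    [DecidableEq β] [CommSemiring R] (φ : α → β) (t : α → R) (f : (ι → β) → R) :
    ∑ g : ι → α, f (φ ∘ g) * ∏ i, t (g i) =
      ∑ z : ι → β, f z * ∏ i, ∑ a with φ a = z i, t a := by
  have hfiber : ∀ z : ι → β, ∏ i, ∑ a with φ a = z i, t a =
      ∑ g : ι → α, if φ ∘ g = z then ∏ i, t (g i) else 0 := by
    intro z
    simp only [sum_filter, Fintype.prod_sum, prod_ite_zero, mem_univ, true_implies, funext_iff,
      Function.comp_apply]
  simp only [hfiber, mul_sum, mul_ite, mul_zero]
  rw [sum_comm]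
  simp only [sum_ite_eq, mem_univ, if_true]

section Weight

variable {ι : Type*} [Fintype ι]

noncomputable def weight (p : ℝ) (x : ι → Bool) : ℝ :=
  ∏ i, if x i then p else 1 - p

lemma weight_nonneg {p : ℝ} (hp : p ∈ Set.Icc (0 : ℝ) 1) (x : ι → Bool) : 0 ≤ weight p x :=
  prod_nonneg fun i _ => by split_ifs <;> linarith [hp.1, hp.2]

lemma sum_weight [DecidableEq ι] (p : ℝ) : ∑ x : ι → Bool, weight p x = 1 :=
  (Fintype.prod_sum (fun _ (b : Bool) => if b then p else 1 - p)).symm.trans (by simp)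

lemma sum_mul_weight_or [DecidableEq ι] (f : (ι → Bool) → ℝ) (p q : ℝ) :
    ∑ z, f z * weight (p + q - p * q) z =
      ∑ x, ∑ y, f (x ⊔ y) * (weight p x * weight q y) := by
  set t : Bool × Bool → ℝ := fun ab => (if ab.1 then p else 1 - p) * (if ab.2 then q else 1 - q)
  have hcoord : ∀ b : Bool, (if b then p + q - p * q else 1 - (p + q - p * q)) =
      ∑ ab with (ab.1 || ab.2) = b, t ab := by
    rintro (_ | _) <;> simp [t, sum_filter, Fintype.sum_prod_type] <;> ring
  simp only [weight, hcoord, ← sum_comp_mul_prod]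
  rw [← Fintype.sum_prod_type',
    ← (Equiv.arrowProdEquivProdArrow ι (fun _ => Bool) (fun _ => Bool)).sum_comp]
  refine sum_congr rfl fun g _ => ?_
  rw [← prod_mul_distrib]
  rfl

end Weight

section Mu

variable {N : ℕ} {F G : Set (Fin N → Bool)} {p q : ℝ}

lemma weight_eq_pow (p : ℝ) (x : Fin N → Bool) :
    weight p x = p ^ wt x * (1 - p) ^ (N - wt x) := by
  rw [weight, prod_ite, prod_const, prod_const, wt, filter_not, card_sdiff]
  simp

lemma mu_eq_sum_indicator (N : ℕ) (p : ℝ) (F : Set (Fin N → Bool)) :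
    mu N p F = ∑ x, F.indicator 1 x * weight p x := by
  classical
  refine sum_congr rfl fun x _ => ?_
  by_cases hx : x ∈ F <;> simp [hx, weight_eq_pow]

lemma mu_nonneg (hp : p ∈ Set.Icc (0 : ℝ) 1) : 0 ≤ mu N p F := by
  rw [mu_eq_sum_indicator]
  exact sum_nonneg fun x _ =>
    mul_nonneg (Set.indicator_nonneg (fun _ _ => zero_le_one) x) (weight_nonneg hp x)

lemma mu_compl (N : ℕ) (p : ℝ) (F : Set (Fin N → Bool)) : mu N p Fᶜ = 1 - mu N p F := by
  simp only [mu_eq_sum_indicator, Set.indicator_compl, Pi.sub_apply, sub_mul, sum_sub_distrib,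
    Pi.one_apply, one_mul, sum_weight]

lemma mu_le_one (hp : p ∈ Set.Icc (0 : ℝ) 1) : mu N p F ≤ 1 := by
  linarith [mu_compl N p F, mu_nonneg (F := Fᶜ) hp]

lemma mu_or (N : ℕ) (p q : ℝ) (F : Set (Fin N → Bool)) :
    mu N (p + q - p * q) F =
      ∑ x, ∑ y, F.indicator 1 (x ⊔ y) * (weight p x * weight q y) := by
  rw [mu_eq_sum_indicator, sum_mul_weight_or]

lemma mu_le_mu_or (hF : IsUpperSet F) (hp : p ∈ Set.Icc (0 : ℝ) 1)
    (hq : q ∈ Set.Icc (0 : ℝ) 1) : mu N p F ≤ mu N (p + q - p * q) F := by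
  rw [mu_or, mu_eq_sum_indicator]
  refine sum_le_sum fun x _ => ?_
  calc F.indicator 1 x * weight p x
      = ∑ y : Fin N → Bool, F.indicator 1 x * (weight p x * weight q y) := by
        rw [← mul_sum, ← mul_sum, sum_weight, mul_one]
    _ ≤ ∑ y : Fin N → Bool, F.indicator 1 (x ⊔ y) * (weight p x * weight q y) :=
        sum_le_sum fun y _ => mul_le_mul_of_nonneg_right
          (hF.monotone_indicator_one le_sup_left)
          (mul_nonneg (weight_nonneg hp x) (weight_nonneg hq y))

lemma monotoneOn_mu (hF : IsUpperSet F) : MonotoneOn (mu N · F) (Set.Icc 0 1) := by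
  intro p hp p' hp' hpp'
  obtain rfl | hp1 := hp.2.eq_or_lt
  · rw [le_antisymm hp'.2 hpp']
  set q := (p' - p) / (1 - p)
  have hq : q ∈ Set.Icc (0 : ℝ) 1 :=
    ⟨div_nonneg (by linarith) (by linarith), (div_le_one (by linarith)).2 (by linarith [hp'.2])⟩
  have hpq : p + q - p * q = p' := by
    linear_combination div_mul_cancel₀ (p' - p) (sub_pos.2 hp1).ne'
  simpa only [hpq] using mu_le_mu_or hF hp hq

lemma mu_or_le_mul (hG : IsLowerSet G) (hp : p ∈ Set.Icc (0 : ℝ) 1)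
    (hq : q ∈ Set.Icc (0 : ℝ) 1) : mu N (p + q - p * q) G ≤ mu N p G * mu N q G := by
  rw [mu_or, mu_eq_sum_indicator, mu_eq_sum_indicator, sum_mul_sum]
  refine sum_le_sum fun x _ => sum_le_sum fun y _ => ?_
  calc G.indicator 1 (x ⊔ y) * (weight p x * weight q y)
      ≤ G.indicator 1 x * G.indicator 1 y * (weight p x * weight q y) :=
        mul_le_mul_of_nonneg_right (hG.indicator_one_sup_le x y)
          (mul_nonneg (weight_nonneg hp x) (weight_nonneg hq y))
    _ = G.indicator 1 x * weight p x * (G.indicator 1 y * weight q y) := by ring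

lemma one_sub_one_sub_pow_mem_Icc (hp : p ∈ Set.Icc (0 : ℝ) 1) (m : ℕ) :
    1 - (1 - p) ^ m ∈ Set.Icc (0 : ℝ) 1 :=
  ⟨sub_nonneg.2 (pow_le_one₀ (by linarith [hp.2]) (by linarith [hp.1])),
    sub_le_self _ (pow_nonneg (by linarith [hp.2]) m)⟩

lemma mu_one_sub_one_sub_pow_le (hG : IsLowerSet G) (hp : p ∈ Set.Icc (0 : ℝ) 1) (m : ℕ) :
    mu N (1 - (1 - p) ^ m) G ≤ mu N p G ^ m := by
  induction m with
  | zero => simpa using mu_le_one (F := G) (Set.left_mem_Icc.2 zero_le_one)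
  | succ m ih =>
    set r := 1 - (1 - p) ^ m
    have hr : 1 - (1 - p) ^ (m + 1) = r + p - r * p := by ring
    calc mu N (1 - (1 - p) ^ (m + 1)) G
        ≤ mu N r G * mu N p G := hr ▸ mu_or_le_mul hG (one_sub_one_sub_pow_mem_Icc hp m) hp
      _ ≤ mu N p G ^ m * mu N p G := mul_le_mul_of_nonneg_right ih (mu_nonneg hp)
      _ = mu N p G ^ (m + 1) := (pow_succ _ _).symm

end Mu

end BollobasThomason

open BollobasThomason in
/-- Bollobás–Thomason: every nontrivial monotone property has a threshold function,
and one can take the critical probability as the threshold function. -/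
theorem bollobas_thomason :
    ∀ ε : ℝ, 0 < ε → ε < 1/2 →
    ∃ K : ℝ, 0 < K ∧
      ∀ (N : ℕ) (F : Set (Fin N → Bool)), F.Nonempty → F ≠ Set.univ →
        MonotoneProp F →
        ∀ p p' : ℝ, p ∈ Set.Icc (0:ℝ) 1 → p' ∈ Set.Icc (0:ℝ) 1 →
          ε ≤ mu N p F → min 1 (K * p) ≤ p' → 1 - ε ≤ mu N p' F := by
  intro ε hε hε2
  obtain ⟨n, hn⟩ := exists_pow_lt_of_lt_one hε (by linarith : 1 - ε < 1)
  refine ⟨(n + 1 : ℕ), by positivity, fun N F _ _ hF p p' hp hp' hεp hKp => ?_⟩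
  have hF : IsUpperSet F := fun x y hxy hx => hF x y hx hxy
  set r := 1 - (1 - p) ^ (n + 1)
  have hr := one_sub_one_sub_pow_mem_Icc hp (n + 1)
  have hrp' : r ≤ p' := by
    have bernoulli := one_add_mul_le_pow (a := -p) (by linarith [hp.2]) (n + 1)
    rw [← sub_eq_add_neg] at bernoulli
    exact le_trans (le_min hr.2 (by linarith)) hKp
  have hcompl : mu N r Fᶜ ≤ ε :=
    calc mu N r Fᶜ ≤ mu N p Fᶜ ^ (n + 1) := mu_one_sub_one_sub_pow_le hF.compl hp (n + 1)
      _ ≤ (1 - ε) ^ (n + 1) :=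
          pow_le_pow_left₀ (mu_nonneg hp) (by rw [mu_compl]; linarith) (n + 1)
      _ ≤ (1 - ε) ^ n := pow_le_pow_of_le_one (by linarith) (by linarith) n.le_succ
      _ ≤ ε := hn.le
  calc 1 - ε ≤ mu N r F := by linarith [mu_compl N r F]
    _ ≤ mu N p' F := monotoneOn_mu hF hr hp' hrp'
end

section
/- Theorem (Park–Pham; the Kahn–Kalai Conjecture): There exists an absolute constant K > 0 such that the following holds for every N ∈ ℕ, every nontrivial monotone property F ⊆ {0,1}^N with L(F) ≥ 2, and every p ∈ (0,1): if F is not p-small, then μ_q(F) ≥ 1/2, where q = min(1, K·p·log L(F)). Equivalently, the critical probability p_c(F) (the unique p with μ_p(F) = 1/2) satisfies p_c(F) ≤ K·q(F)·log L(F), where q(F) is the largest p for which F is p-small. -/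
open Finset

/-- A property `F ⊆ {0,1}^N` is `p`-small if it admits a cover `G` with
`∑_{S ∈ G} p^{|S|} ≤ 1/2`. -/
def PSmall (N : ℕ) (p : ℝ) (F : Set (Fin N → Bool)) : Prop :=
  ∃ G : Finset (Fin N → Bool),
    (∀ T ∈ F, ∃ S ∈ G, S ≤ T) ∧ ∑ S ∈ G, p ^ wt S ≤ 1/2

open Classical in
/-- `L(F)`: the maximum number of `1`-coordinates of a minimal element of `F`. -/
noncomputable def Lmax (N : ℕ) (F : Set (Fin N → Bool)) : ℕ :=
  (Finset.univ.filter
    (fun x : Fin N → Bool => x ∈ F ∧ ∀ y : Fin N → Bool, y ∈ F → y ≤ x → y = x)).sup wt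

/-!
The random set is sprinkled in `m = ⌊log₂ L⌋ + 1` independent rounds of density `σ ≈ 32 p`, whose
union has density `1 - (1 - σ)^m ≤ m σ = O(p log L)`. Given the set `W` of a round, each member
`T` of the current family is replaced by a minimum fragment `U = T' \ W`, where `T' ⊆ T ∪ W` is a
member with `|T' \ W|` least. While members have size `< 2^(j+1)`, the fragments of size `≥ 2^j`
are put into a cover and the smaller ones form the family of the next round.

A minimum fragment lies in every member inside `V = W ∪ U`, so the pair `(W, U)` is determined by
`V` and a subset `U` of one fixed member inside `V`. Trading `p^|U|` for the ratio
`((1 - σ) p / σ)^|U| ≤ 32^(-|U|)` between the weights of `W` and `V` bounds the expected weight of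
the cover collected in round `j` by `4^(2^j) · 32^(-2^j) = 8^(-2^j)`. If the final union contains
no minimal element of `F`, the collected fragments cover `F`; as `F` is not `p`-small, every cover
has weight more than `1/2`, so this happens with probability at most `2 ∑ 8^(-2^j) ≤ 1/2`.
-/

namespace ParkPham

lemma one_sub_one_sub_pow_mem {σ : ℝ} (hσ₀ : 0 ≤ σ) (hσ₁ : σ ≤ 1) (m : ℕ) :
    0 ≤ 1 - (1 - σ) ^ m ∧ 1 - (1 - σ) ^ m ≤ 1 :=
  ⟨sub_nonneg.2 (pow_le_one₀ (by linarith) (by linarith)),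
    sub_le_self _ (pow_nonneg (by linarith) _)⟩

lemma one_sub_one_sub_pow_le {σ : ℝ} (hσ : σ ≤ 2) (m : ℕ) : 1 - (1 - σ) ^ m ≤ m * σ := by
  have := one_add_mul_le_pow (a := -σ) (by linarith) m
  rw [← sub_eq_add_neg] at this
  linarith

lemma sum_one_eighth_pow_two_pow_le (m : ℕ) : ∑ j ∈ range m, (1 / 8 : ℝ) ^ 2 ^ j ≤ 1 / 4 := by
  calc ∑ j ∈ range m, (1 / 8 : ℝ) ^ 2 ^ j
      ≤ ∑ j ∈ range m, 1 / 8 * (1 / 2 : ℝ) ^ j := sum_le_sum fun j _ => by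
        calc (1 / 8 : ℝ) ^ 2 ^ j ≤ (1 / 8) ^ (j + 1) :=
              pow_le_pow_of_le_one (by norm_num) (by norm_num) (Nat.lt_two_pow_self)
          _ = 1 / 8 * (1 / 8) ^ j := by ring
          _ ≤ 1 / 8 * (1 / 2) ^ j := by gcongr; norm_num
    _ = 1 / 8 * ∑ j ∈ range m, (1 / 2 : ℝ) ^ j := (mul_sum _ _ _).symm
    _ ≤ 1 / 8 * 2 := by gcongr; exact sum_geometric_two_le m
    _ = 1 / 4 := by norm_num

lemma natLog_two_add_one_le {ℓ : ℕ} (hℓ : 2 ≤ ℓ) :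
    ((Nat.log 2 ℓ + 1 : ℕ) : ℝ) ≤ 4 * Real.log ℓ := by
  have h₁ : 1 ≤ Nat.log 2 ℓ := Nat.log_pos one_lt_two hℓ
  have h₂ : (Nat.log 2 ℓ : ℝ) ≤ Real.log ℓ / Real.log 2 := Real.natLog_le_logb ℓ 2
  have h₃ := Real.log_two_gt_d9
  rw [le_div_iff₀ (by linarith)] at h₂
  have h₁' : (1 : ℝ) ≤ Nat.log 2 ℓ := by exact_mod_cast h₁
  push_cast
  nlinarith

lemma sum_pow_le_of_card_lt {α : Type*} {T : Finset α} {j : ℕ} {r : ℝ} (hT : #T < 2 ^ (j + 1))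
    (hr₀ : 0 ≤ r) (hr₁ : r ≤ 1) : ∑ U ∈ T.powerset with 2 ^ j ≤ #U, r ^ #U ≤ (4 * r) ^ 2 ^ j := by
  calc ∑ U ∈ T.powerset with 2 ^ j ≤ #U, r ^ #U
      ≤ ∑ U ∈ T.powerset with 2 ^ j ≤ #U, r ^ 2 ^ j :=
        sum_le_sum fun U hU => pow_le_pow_of_le_one hr₀ hr₁ (mem_filter.1 hU).2
    _ ≤ ∑ U ∈ T.powerset, r ^ 2 ^ j :=
        sum_le_sum_of_subset_of_nonneg (filter_subset _ _) fun _ _ _ => pow_nonneg hr₀ _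
    _ = (2 : ℝ) ^ #T * r ^ 2 ^ j := by simp
    _ ≤ 4 ^ 2 ^ j * r ^ 2 ^ j := by
        refine mul_le_mul_of_nonneg_right ?_ (pow_nonneg hr₀ _)
        calc (2 : ℝ) ^ #T ≤ 2 ^ (2 * 2 ^ j) := pow_le_pow_right₀ (by norm_num) (by omega)
          _ = 4 ^ 2 ^ j := by rw [pow_mul]; norm_num
    _ = (4 * r) ^ 2 ^ j := (mul_pow _ _ _).symm

section Bernoulli

variable {α : Type*}

-- Only evaluated at `A ⊆ s`, where the subtraction does not truncate.
def bernoulliWeight (a : ℝ) (s A : Finset α) : ℝ := a ^ #A * (1 - a) ^ (#s - #A)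

noncomputable def bernoulliExp (a : ℝ) (s : Finset α) (f : Finset α → ℝ) : ℝ :=
  ∑ A ∈ s.powerset, bernoulliWeight a s A * f A

variable {a b : ℝ} {s : Finset α} {f g : Finset α → ℝ}

lemma bernoulliWeight_nonneg (ha₀ : 0 ≤ a) (ha₁ : a ≤ 1) (s A : Finset α) :
    0 ≤ bernoulliWeight a s A :=
  mul_nonneg (pow_nonneg ha₀ _) (pow_nonneg (sub_nonneg.2 ha₁) _)

lemma bernoulliExp_empty (a : ℝ) (f : Finset α → ℝ) : bernoulliExp a ∅ f = f ∅ := by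
  simp [bernoulliExp, bernoulliWeight]

lemma bernoulliExp_insert [DecidableEq α] {x : α} (hx : x ∉ s) (f : Finset α → ℝ) :
    bernoulliExp a (insert x s) f =
      (1 - a) * bernoulliExp a s f + a * bernoulliExp a s (fun A => f (insert x A)) := by
  simp only [bernoulliExp, sum_powerset_insert hx, mul_sum]
  congr 1 <;> refine sum_congr rfl fun A hA => ?_ <;> have hAs := card_le_card (mem_powerset.1 hA)
  · rw [bernoulliWeight, bernoulliWeight, card_insert_of_notMem hx, Nat.succ_sub hAs, pow_succ]
    ring
  · rw [bernoulliWeight, bernoulliWeight, card_insert_of_notMem hx,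
      card_insert_of_notMem fun h => hx (mem_powerset.1 hA h), Nat.succ_sub_succ]
    ring

lemma bernoulliExp_add (a : ℝ) (s : Finset α) (f g : Finset α → ℝ) :
    bernoulliExp a s (fun A => f A + g A) = bernoulliExp a s f + bernoulliExp a s g := by
  simp only [bernoulliExp, mul_add, sum_add_distrib]

lemma bernoulliExp_const_mul (a c : ℝ) (s : Finset α) (f : Finset α → ℝ) :
    bernoulliExp a s (fun A => c * f A) = c * bernoulliExp a s f := by
  simp only [bernoulliExp, mul_sum]
  exact sum_congr rfl fun _ _ => by ring

lemma bernoulliExp_sub (a : ℝ) (s : Finset α) (f g : Finset α → ℝ) :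
    bernoulliExp a s (fun A => f A - g A) = bernoulliExp a s f - bernoulliExp a s g := by
  simp only [bernoulliExp, mul_sub, sum_sub_distrib]

lemma bernoulliExp_const (a c : ℝ) (s : Finset α) : bernoulliExp a s (fun _ => c) = c := by
  simp only [bernoulliExp, bernoulliWeight, ← sum_mul, sum_pow_mul_eq_add_pow, add_sub_cancel,
    one_pow, one_mul]

lemma bernoulliExp_mono (ha₀ : 0 ≤ a) (ha₁ : a ≤ 1) (h : ∀ A, f A ≤ g A) :
    bernoulliExp a s f ≤ bernoulliExp a s g :=
  sum_le_sum fun A _ => mul_le_mul_of_nonneg_left (h A) (bernoulliWeight_nonneg ha₀ ha₁ s A)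

theorem bernoulliExp_union [DecidableEq α] (a b : ℝ) (s : Finset α) (f : Finset α → ℝ) :
    bernoulliExp a s (fun A => bernoulliExp b s (fun B => f (A ∪ B))) =
      bernoulliExp (a + b - a * b) s f := by
  induction s using Finset.induction_on generalizing f with
  | empty => simp [bernoulliExp_empty]
  | insert x s hx ih =>
    simp only [bernoulliExp_insert hx, union_insert, insert_union, insert_idem,
      bernoulliExp_add, bernoulliExp_const_mul, ih, ih (fun C => f (insert x C))]
    ring

theorem bernoulliExp_le_of_monotone [DecidableEq α] (ha₀ : 0 ≤ a) (hab : a ≤ b) (hb₁ : b ≤ 1)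
    (hf : Monotone f) : bernoulliExp a s f ≤ bernoulliExp b s f := by
  obtain rfl | ha₁ := (hab.trans hb₁).eq_or_lt
  · rw [le_antisymm hb₁ hab]
  set θ := (b - a) / (1 - a)
  have hθ₀ : 0 ≤ θ := div_nonneg (by linarith) (by linarith)
  have hθ₁ : θ ≤ 1 := (div_le_one (by linarith)).2 (by linarith)
  have hb : a + θ - a * θ = b := by
    simp only [θ]
    field_simp
    ring
  calc bernoulliExp a s f = bernoulliExp a s (fun A => bernoulliExp θ s (fun _ => f A)) := by
        simp only [bernoulliExp_const]
    _ ≤ bernoulliExp a s (fun A => bernoulliExp θ s (fun B => f (A ∪ B))) :=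
        bernoulliExp_mono ha₀ ha₁.le fun A =>
          bernoulliExp_mono hθ₀ hθ₁ fun B => hf subset_union_left
    _ = bernoulliExp b s f := by rw [bernoulliExp_union, hb]

end Bernoulli

section Covers

variable {α : Type*}

def Covers (G H : Finset (Finset α)) : Prop := ∀ T ∈ H, ∃ U ∈ G, U ⊆ T

def weight (p : ℝ) (G : Finset (Finset α)) : ℝ := ∑ U ∈ G, p ^ #U

open Classical in
noncomputable def miss (H : Finset (Finset α)) (V : Finset α) : ℝ :=
  if ∃ T ∈ H, T ⊆ V then 0 else 1

variable {p : ℝ}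

lemma weight_nonneg (hp : 0 ≤ p) (G : Finset (Finset α)) : 0 ≤ weight p G :=
  sum_nonneg fun _ _ => pow_nonneg hp _

lemma weight_union_le [DecidableEq α] (hp : 0 ≤ p) (G₁ G₂ : Finset (Finset α)) :
    weight p (G₁ ∪ G₂) ≤ weight p G₁ + weight p G₂ := by
  rw [weight, weight, weight, ← sum_union_inter]
  exact le_add_of_nonneg_right (weight_nonneg hp _)

lemma miss_nonneg (H : Finset (Finset α)) (V : Finset α) : 0 ≤ miss H V := by
  unfold miss; split_ifs <;> norm_num

lemma miss_le_one (H : Finset (Finset α)) (V : Finset α) : miss H V ≤ 1 := by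
  unfold miss; split_ifs <;> norm_num

end Covers

section Fragments

variable {α : Type*} [DecidableEq α] {H : Finset (Finset α)}

def IsCommonSubset (H : Finset (Finset α)) (V U : Finset α) : Prop :=
  (∃ T ∈ H, T ⊆ V) ∧ ∀ T ∈ H, T ⊆ V → U ⊆ T

/-- The paper's minimum fragment `T' \ W`, for `T' ∈ H` inside `T ∪ W` with `|T' \ W|` least,
characterised through `U` and `W ∪ U` alone so that `W` can be recovered from `W ∪ U`. -/
def IsMinFragment (H : Finset (Finset α)) (W U : Finset α) : Prop :=
  Disjoint U W ∧ IsCommonSubset H (W ∪ U) U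

open Classical in
noncomputable def fragments [Fintype α] (H : Finset (Finset α)) (W : Finset α) :
    Finset (Finset α) :=
  univ.filter (IsMinFragment H W)

lemma exists_isMinFragment_subset {W T : Finset α} (hT : T ∈ H) :
    ∃ U, IsMinFragment H W U ∧ U ⊆ T := by
  obtain ⟨T', hT', hmin⟩ := exists_min_image (H.filter (· ⊆ T ∪ W)) (fun T' => #(T' \ W))
    ⟨T, mem_filter.2 ⟨hT, subset_union_left⟩⟩
  rw [mem_filter] at hT'
  have hUT : T' \ W ⊆ T := fun i hi => by
    have := hT'.2 (mem_sdiff.1 hi).1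
    simp_all
  refine ⟨T' \ W, ⟨sdiff_disjoint, ⟨T', hT'.1, by simp⟩, fun T'' hT'' hsub => ?_⟩, hUT⟩
  have hsub' : T'' \ W ⊆ T' \ W := fun i hi => by
    have := hsub (mem_sdiff.1 hi).1
    simp_all
  have hle := hmin T'' <| mem_filter.2
    ⟨hT'', hsub.trans (union_subset subset_union_right (hUT.trans subset_union_left))⟩
  rw [← eq_of_subset_of_card_le hsub' hle]
  exact sdiff_subset

variable [Fintype α] {σ p r : ℝ}

lemma bernoulliWeight_mul_pow_le (hσ₀ : 0 < σ) (hσ₁ : σ ≤ 1) (hp : 0 ≤ p)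
    (hr : (1 - σ) * p ≤ σ * r) {U W : Finset α} (h : Disjoint U W) :
    bernoulliWeight σ univ W * p ^ #U ≤ r ^ #U * bernoulliWeight σ univ (W ∪ U) := by
  have hcard : #(W ∪ U) = #W + #U := card_union_of_disjoint h.symm
  have hle : #W + #U ≤ #(univ : Finset α) := hcard ▸ card_le_card (subset_univ _)
  have key : σ ^ #U * (bernoulliWeight σ univ W * p ^ #U) =
      ((1 - σ) * p) ^ #U * bernoulliWeight σ univ (W ∪ U) := by
    rw [bernoulliWeight, bernoulliWeight, hcard,
      show #(univ : Finset α) - #W = #(univ : Finset α) - (#W + #U) + #U by omega, mul_pow]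
    ring
  refine le_of_mul_le_mul_left ?_ (pow_pos hσ₀ #U)
  calc σ ^ #U * (bernoulliWeight σ univ W * p ^ #U)
      ≤ (σ * r) ^ #U * bernoulliWeight σ univ (W ∪ U) := by
        rw [key]
        exact mul_le_mul_of_nonneg_right
          (pow_le_pow_left₀ (mul_nonneg (by linarith) hp) hr _)
          (bernoulliWeight_nonneg hσ₀.le hσ₁ _ _)
    _ = σ ^ #U * (r ^ #U * bernoulliWeight σ univ (W ∪ U)) := by ring

lemma sum_bernoulliWeight_mul_pow_le (hσ₀ : 0 < σ) (hσ₁ : σ ≤ 1) (hp : 0 ≤ p)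
    (hr : (1 - σ) * p ≤ σ * r) (U : Finset α) (Q : Finset α → Prop) [DecidablePred Q] :
    ∑ W with Disjoint U W ∧ Q (W ∪ U), bernoulliWeight σ univ W * p ^ #U ≤
      r ^ #U * ∑ V with U ⊆ V ∧ Q V, bernoulliWeight σ univ V := by
  calc ∑ W with Disjoint U W ∧ Q (W ∪ U), bernoulliWeight σ univ W * p ^ #U
      ≤ ∑ W with Disjoint U W ∧ Q (W ∪ U), r ^ #U * bernoulliWeight σ univ (W ∪ U) :=
        sum_le_sum fun W hW =>
          bernoulliWeight_mul_pow_le hσ₀ hσ₁ hp hr (mem_filter.1 hW).2.1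
    _ = r ^ #U * ∑ V with U ⊆ V ∧ Q V, bernoulliWeight σ univ V := by
        rw [← mul_sum]
        congr 1
        refine sum_nbij' (fun W => W ∪ U) (fun V => V \ U) ?_ ?_ ?_ ?_ (fun _ _ => rfl) <;>
          simp only [mem_filter, mem_univ, true_and]
        · exact fun W hW => ⟨subset_union_right, hW.2⟩
        · exact fun V hV => ⟨disjoint_sdiff, by rw [sdiff_union_of_subset hV.1]; exact hV.2⟩
        · exact fun W hW => union_sdiff_cancel_right hW.1.symm
        · exact fun V hV => sdiff_union_of_subset hV.1

open Classical in
lemma sum_pow_isCommonSubset_le {j : ℕ} (hH : ∀ T ∈ H, #T < 2 ^ (j + 1)) (hr₀ : 0 ≤ r) (hr₁ : r ≤ 1)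
    (V : Finset α) :
    ∑ U with U ⊆ V ∧ IsCommonSubset H V U ∧ 2 ^ j ≤ #U, r ^ #U ≤ (4 * r) ^ 2 ^ j := by
  by_cases hV : ∃ T ∈ H, T ⊆ V
  · obtain ⟨T, hT, hTV⟩ := hV
    refine le_trans (sum_le_sum_of_subset_of_nonneg ?_ fun _ _ _ => pow_nonneg hr₀ _)
      (sum_pow_le_of_card_lt (hH T hT) hr₀ hr₁)
    intro U hU
    simp only [mem_filter, mem_univ, true_and, mem_powerset] at hU ⊢
    exact ⟨hU.2.1.2 T hT hTV, hU.2.2⟩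
  · rw [sum_eq_zero fun U hU => absurd (mem_filter.1 hU).2.2.1.1 hV]
    exact pow_nonneg (by linarith) _

open Classical in
theorem bernoulliExp_weight_filter_fragments_le {j : ℕ} (hσ₀ : 0 < σ) (hσ₁ : σ ≤ 1) (hp : 0 ≤ p)
    (hr₀ : 0 ≤ r) (hr₁ : r ≤ 1) (hr : (1 - σ) * p ≤ σ * r) (hH : ∀ T ∈ H, #T < 2 ^ (j + 1)) :
    bernoulliExp σ univ (fun W => weight p ((fragments H W).filter (2 ^ j ≤ #·))) ≤
      (4 * r) ^ 2 ^ j := by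
  set Q : Finset α → Finset α → Prop := fun U V => IsCommonSubset H V U ∧ 2 ^ j ≤ #U
  calc bernoulliExp σ univ (fun W => weight p ((fragments H W).filter (2 ^ j ≤ #·)))
      = ∑ U, ∑ W with Disjoint U W ∧ Q U (W ∪ U), bernoulliWeight σ univ W * p ^ #U := by
        simp only [bernoulliExp, weight, fragments, powerset_univ, filter_filter, mul_sum]
        refine sum_comm' fun W U => ?_
        simp [IsMinFragment, Q, and_assoc]
    _ ≤ ∑ U, r ^ #U * ∑ V with U ⊆ V ∧ Q U V, bernoulliWeight σ univ V :=
        sum_le_sum fun U _ => sum_bernoulliWeight_mul_pow_le hσ₀ hσ₁ hp hr U (Q U)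
    _ = bernoulliExp σ univ (fun V => ∑ U with U ⊆ V ∧ Q U V, r ^ #U) := by
        simp only [bernoulliExp, powerset_univ, mul_sum, sum_filter]
        rw [sum_comm]
        refine sum_congr rfl fun V _ => sum_congr rfl fun U _ => ?_
        split_ifs <;> ring
    _ ≤ bernoulliExp σ univ (fun _ => (4 * r) ^ 2 ^ j) :=
        bernoulliExp_mono hσ₀.le hσ₁ fun V => sum_pow_isCommonSubset_le hH hr₀ hr₁ V
    _ = (4 * r) ^ 2 ^ j := bernoulliExp_const _ _ _

open Classical in
lemma covers_filter_fragments_union {W : Finset α} {G : Finset (Finset α)} (k : ℕ)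
    (hG : Covers G ((fragments H W).filter (#· < k))) :
    Covers ((fragments H W).filter (k ≤ #·) ∪ G) H := by
  intro T hT
  obtain ⟨U, hU, hUT⟩ := exists_isMinFragment_subset (W := W) hT
  have hU' : U ∈ fragments H W := by simpa [fragments] using hU
  by_cases hk : k ≤ #U
  · exact ⟨U, mem_union_left _ (mem_filter.2 ⟨hU', hk⟩), hUT⟩
  · obtain ⟨U', hU', hU'U⟩ := hG U (mem_filter.2 ⟨hU', not_le.1 hk⟩)
    exact ⟨U', mem_union_right _ hU', hU'U.trans hUT⟩

lemma miss_union_le {W : Finset α} {H' : Finset (Finset α)} (hH' : H' ⊆ fragments H W)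
    (V : Finset α) : miss H (W ∪ V) ≤ miss H' V := by
  by_cases hV : ∃ U ∈ H', U ⊆ V
  · have hWV : ∃ T ∈ H, T ⊆ W ∪ V := by
      obtain ⟨U, hU, hUV⟩ := hV
      have hU : IsMinFragment H W U := by simpa [fragments] using hH' hU
      obtain ⟨T, hT, hTU⟩ := hU.2.1
      exact ⟨T, hT, hTU.trans (union_subset_union_right hUV)⟩
    rw [miss, miss, if_pos hWV, if_pos hV]
  · calc miss H (W ∪ V) ≤ 1 := miss_le_one H _
      _ = miss H' V := by rw [miss, if_neg hV]

open Classical in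
lemma mul_bernoulliExp_miss_union_le (hp : 0 ≤ p) {q t e : ℝ} (hq₀ : 0 ≤ q) (hq₁ : q ≤ 1)
    (ht₀ : 0 ≤ t) (ht : ∀ G, Covers G H → t ≤ weight p G) (W : Finset α) (k : ℕ)
    (hsmall : ∀ t' : ℝ, 0 ≤ t' →
      (∀ G, Covers G ((fragments H W).filter (#· < k)) → t' ≤ weight p G) →
      t' * bernoulliExp q univ (miss ((fragments H W).filter (#· < k))) ≤ e) :
    t * bernoulliExp q univ (fun V => miss H (W ∪ V)) ≤
      weight p ((fragments H W).filter (k ≤ #·)) + e := by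
  set c := weight p ((fragments H W).filter (k ≤ #·))
  set H' := (fragments H W).filter (#· < k)
  have hc : 0 ≤ c := weight_nonneg hp _
  have hH' := hsmall (max 0 (t - c)) (le_max_left _ _) fun G hG => max_le (weight_nonneg hp G) <| by
    linarith [ht _ (covers_filter_fragments_union _ hG), weight_union_le hp
      ((fragments H W).filter (k ≤ #·)) G]
  have hpt : ∀ V, t * miss H (W ∪ V) ≤ max 0 (t - c) * miss H' V + c := fun V => by
    have h₀ := miss_nonneg H' V
    have hle : miss H (W ∪ V) ≤ miss H' V := miss_union_le (filter_subset _ _) V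
    nlinarith [mul_le_mul_of_nonneg_left hle ht₀,
      mul_le_mul_of_nonneg_right (le_max_right 0 (t - c)) h₀,
      mul_le_mul_of_nonneg_left (miss_le_one H' V) hc]
  calc t * bernoulliExp q univ (fun V => miss H (W ∪ V))
      = bernoulliExp q univ (fun V => t * miss H (W ∪ V)) :=
        (bernoulliExp_const_mul _ _ _ _).symm
    _ ≤ bernoulliExp q univ (fun V => max 0 (t - c) * miss H' V + c) :=
        bernoulliExp_mono hq₀ hq₁ hpt
    _ = max 0 (t - c) * bernoulliExp q univ (miss H') + c := by
        rw [bernoulliExp_add, bernoulliExp_const_mul, bernoulliExp_const]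
    _ ≤ c + e := by linarith

open Classical in
theorem mul_bernoulliExp_miss_le (hσ₀ : 0 < σ) (hσ₁ : σ ≤ 1) (hp : 0 ≤ p) (hr₀ : 0 ≤ r)
    (hr₁ : r ≤ 1) (hr : (1 - σ) * p ≤ σ * r) (m : ℕ) (hH : ∀ T ∈ H, #T < 2 ^ m) {t : ℝ} (ht₀ : 0 ≤ t) (ht : ∀ G, Covers G H → t ≤ weight p G) :
    t * bernoulliExp (1 - (1 - σ) ^ m) univ (miss H) ≤ ∑ j ∈ range m, (4 * r) ^ 2 ^ j := by
  induction m generalizing H t with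
  | zero =>
    obtain rfl | ⟨T, hT⟩ := H.eq_empty_or_nonempty
    · have : t ≤ 0 := by simpa [weight] using ht ∅ fun T hT => absurd hT (notMem_empty T)
      simp [le_antisymm this ht₀]
    · have hT₀ : T = ∅ := card_eq_zero.1 (by simpa using hH T hT)
      have hmiss : miss H = fun _ => 0 := funext fun V => by
        rw [miss, if_pos ⟨T, hT, hT₀ ▸ empty_subset V⟩]
      simp [hmiss, bernoulliExp_const]
  | succ m ih =>
    set q := 1 - (1 - σ) ^ m
    obtain ⟨hq₀, hq₁⟩ := one_sub_one_sub_pow_mem hσ₀.le hσ₁ m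
    set err := ∑ j ∈ range m, (4 * r) ^ 2 ^ j
    have hW : ∀ W, t * bernoulliExp q univ (fun V => miss H (W ∪ V)) ≤
        weight p ((fragments H W).filter (2 ^ m ≤ #·)) + err := fun W =>
      mul_bernoulliExp_miss_union_le hp hq₀ hq₁ ht₀ ht W (2 ^ m) fun _ ht'₀ ht' =>
        ih (fun T hT => (mem_filter.1 hT).2) ht'₀ ht'
    calc t * bernoulliExp (1 - (1 - σ) ^ (m + 1)) univ (miss H)
        = t * bernoulliExp σ univ (fun W => bernoulliExp q univ (fun V => miss H (W ∪ V))) := by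
          rw [bernoulliExp_union]
          congr 2
          ring
      _ = bernoulliExp σ univ (fun W => t * bernoulliExp q univ (fun V => miss H (W ∪ V))) :=
          (bernoulliExp_const_mul _ _ _ _).symm
      _ ≤ bernoulliExp σ univ (fun W => weight p ((fragments H W).filter (2 ^ m ≤ #·)) + err) :=
          bernoulliExp_mono hσ₀.le hσ₁ hW
      _ ≤ (4 * r) ^ 2 ^ m + err := by
          rw [bernoulliExp_add, bernoulliExp_const]
          linarith [bernoulliExp_weight_filter_fragments_le hσ₀ hσ₁ hp hr₀ hr₁ hr hH]
      _ = ∑ j ∈ range (m + 1), (4 * r) ^ 2 ^ j := by rw [sum_range_succ, add_comm]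

end Fragments

section Hypercube

def boolFunOrderIsoFinset (α : Type*) [Fintype α] [DecidableEq α] : (α → Bool) ≃o Finset α where
  toFun x := univ.filter (x · = true)
  invFun A i := decide (i ∈ A)
  left_inv x := funext fun i => by simp
  right_inv A := by ext i; simp
  map_rel_iff' {x y} := by
    simp only [Equiv.coe_fn_mk, subset_iff, mem_filter, mem_univ, true_and, Pi.le_def]
    refine ⟨fun h i => ?_, fun h i hi => ?_⟩
    · cases hx : x i
      · exact Bool.false_le _
      · simp [h hx]
    · exact Bool.eq_true_of_true_le (hi ▸ h i)

variable {N : ℕ} {F : Set (Fin N → Bool)}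

lemma wt_symm_boolFunOrderIsoFinset (A : Finset (Fin N)) :
    wt ((boolFunOrderIsoFinset _).symm A) = #A := by
  conv_rhs => rw [← (boolFunOrderIsoFinset _).apply_symm_apply A]
  rfl

open Classical in
lemma mu_eq_bernoulliExp (q : ℝ) (F : Set (Fin N → Bool)) :
    mu N q F =
      bernoulliExp q univ (fun A => if (boolFunOrderIsoFinset _).symm A ∈ F then 1 else 0) := by
  rw [mu, bernoulliExp, powerset_univ, ← (boolFunOrderIsoFinset (Fin N)).symm.toEquiv.sum_comp]
  refine sum_congr rfl fun A _ => ?_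
  simp [bernoulliWeight, wt_symm_boolFunOrderIsoFinset]

open Classical in
noncomputable def minimalSets (F : Set (Fin N → Bool)) : Finset (Finset (Fin N)) :=
  univ.filter fun A => Minimal (· ∈ F) ((boolFunOrderIsoFinset _).symm A)

lemma card_le_Lmax {A : Finset (Fin N)} (hA : A ∈ minimalSets F) : #A ≤ Lmax N F := by
  classical
  simp only [minimalSets, mem_filter, mem_univ, true_and] at hA
  rw [← wt_symm_boolFunOrderIsoFinset, Lmax]
  exact le_sup (mem_filter.2 ⟨mem_univ _, hA.1, fun y hy hyx => le_antisymm hyx (hA.2 hy hyx)⟩)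

lemma exists_minimalSets_subset {x : Fin N → Bool} (hx : x ∈ F) :
    ∃ A ∈ minimalSets F, A ⊆ boolFunOrderIsoFinset _ x := by
  obtain ⟨y, hyx, hy⟩ := F.toFinite.exists_le_minimal hx
  refine ⟨boolFunOrderIsoFinset _ y, ?_, (boolFunOrderIsoFinset _).monotone hyx⟩
  simpa [minimalSets] using hy

lemma mem_of_minimalSets_subset (hF : MonotoneProp F) {x : Fin N → Bool} {A : Finset (Fin N)}
    (hA : A ∈ minimalSets F) (hAx : A ⊆ boolFunOrderIsoFinset _ x) : x ∈ F := by
  simp only [minimalSets, mem_filter, mem_univ, true_and] at hA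
  exact hF _ _ hA.1 ((OrderIso.symm_apply_le (boolFunOrderIsoFinset _)).2 hAx)

lemma mu_eq_one_sub_bernoulliExp_miss (hF : MonotoneProp F) (q : ℝ) :
    mu N q F = 1 - bernoulliExp q univ (miss (minimalSets F)) := by
  rw [mu_eq_bernoulliExp]
  conv_rhs => rw [← bernoulliExp_const q 1 (univ : Finset (Fin N)), ← bernoulliExp_sub]
  congr 1
  funext A
  have hx := (boolFunOrderIsoFinset (Fin N)).apply_symm_apply A
  by_cases hA : (boolFunOrderIsoFinset _).symm A ∈ F
  · obtain ⟨B, hB, hBA⟩ := exists_minimalSets_subset hA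
    have hhit : ∃ B ∈ minimalSets F, B ⊆ A := ⟨B, hB, hx ▸ hBA⟩
    simp [miss, hA, hhit]
  · have hmiss : ¬ ∃ B ∈ minimalSets F, B ⊆ A := fun ⟨B, hB, hBA⟩ =>
      hA (mem_of_minimalSets_subset hF hB (hx.symm ▸ hBA))
    simp [miss, hA, hmiss]

lemma mu_mono (hF : MonotoneProp F) {q₀ q : ℝ} (h₀ : 0 ≤ q₀) (hq : q₀ ≤ q) (h₁ : q ≤ 1) :
    mu N q₀ F ≤ mu N q F := by
  rw [mu_eq_bernoulliExp, mu_eq_bernoulliExp]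
  refine bernoulliExp_le_of_monotone h₀ hq h₁ fun A B hAB => ?_
  split_ifs with hA hB <;> norm_num
  exact hB (hF _ _ hA ((boolFunOrderIsoFinset _).symm.monotone hAB))

lemma half_lt_weight_of_not_pSmall {p : ℝ} (hp : ¬ PSmall N p F) {G : Finset (Finset (Fin N))}
    (hG : Covers G (minimalSets F)) : 1 / 2 < weight p G := by
  by_contra! hGp
  refine hp ⟨G.map (boolFunOrderIsoFinset _).symm.toEquiv.toEmbedding, fun T hT => ?_, ?_⟩
  · obtain ⟨A, hA, hAT⟩ := exists_minimalSets_subset hT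
    obtain ⟨U, hU, hUA⟩ := hG A hA
    exact ⟨_, mem_map_of_mem _ hU, (OrderIso.symm_apply_le _).2 (hUA.trans hAT)⟩
  · simpa [weight, wt_symm_boolFunOrderIsoFinset] using hGp

end Hypercube

end ParkPham

open ParkPham

/-- The Kahn–Kalai Conjecture, proved by Park and Pham: there is an absolute constant `K`
such that for every nontrivial monotone property `F` with `L(F) ≥ 2` and every `p ∈ (0,1)`,
if `F` is not `p`-small then `μ_q(F) ≥ 1/2` where `q = min(1, K·p·log L(F))`; equivalently,
`p_c(F) ≤ K · q(F) · log L(F)`. -/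
theorem park_pham :
    ∃ K : ℝ, 0 < K ∧
      ∀ (N : ℕ) (F : Set (Fin N → Bool)), F.Nonempty → F ≠ Set.univ →
        MonotoneProp F → 2 ≤ Lmax N F →
        ∀ p : ℝ, 0 < p → p < 1 → ¬ PSmall N p F →
          1/2 ≤ mu N (min 1 (K * p * Real.log (Lmax N F))) F := by
  refine ⟨128, by norm_num, fun N F _ _ hF hL p hp _ hsmall => ?_⟩
  -- `σ = min 1 (32 p)` makes the ratio `(1 - σ) p / σ` at most `1/32`, so round `j` costs
  -- `(1/8)^(2^j)`, and the union of `m` rounds has density at most `32 m p ≤ 128 p log L`.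
  set m := Nat.log 2 (Lmax N F) + 1
  set σ := min 1 (32 * p)
  have hσ₀ : 0 < σ := lt_min one_pos (by positivity)
  have hσ₁ : σ ≤ 1 := min_le_left _ _
  have hr : (1 - σ) * p ≤ σ * (1 / 32) := by
    rcases min_choice 1 (32 * p) with h | h <;> simp only [σ, h] <;> nlinarith
  have hmiss := mul_bernoulliExp_miss_le hσ₀ hσ₁ hp.le (by norm_num) (by norm_num) hr m
    (fun A hA => (card_le_Lmax hA).trans_lt (Nat.lt_pow_succ_log_self one_lt_two _))
    (by norm_num : (0 : ℝ) ≤ 1 / 2) fun G hG => (half_lt_weight_of_not_pSmall hsmall hG).le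
  rw [show (4 : ℝ) * (1 / 32) = 1 / 8 by norm_num] at hmiss
  have herr := sum_one_eighth_pow_two_pow_le m
  have hq : 1 - (1 - σ) ^ m ≤ min 1 (128 * p * Real.log (Lmax N F)) := by
    refine le_min (one_sub_one_sub_pow_mem hσ₀.le hσ₁ m).2 ?_
    calc 1 - (1 - σ) ^ m ≤ m * σ := one_sub_one_sub_pow_le (by linarith) m
      _ ≤ 4 * Real.log (Lmax N F) * (32 * p) :=
          mul_le_mul (natLog_two_add_one_le hL) (min_le_right _ _) hσ₀.le (by positivity)
      _ = 128 * p * Real.log (Lmax N F) := by ring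
  calc 1 / 2 ≤ mu N (1 - (1 - σ) ^ m) F := by
        rw [mu_eq_one_sub_bernoulliExp_miss hF]
        linarith
    _ ≤ _ := mu_mono hF (one_sub_one_sub_pow_mem hσ₀.le hσ₁ m).1 hq (min_le_left _ _)
end

section
/- Spreadness of the uniform distribution on perfect matchings: Let n ≥ 2 be even and let ν be the uniform distribution on perfect matchings of the complete graph K_n. Let A be a set of k edges of K_n with 1 ≤ k ≤ n/2. If the edges of A are pairwise vertex-disjoint (A is a matching), then Pr_{M∼ν}[A ⊆ M] = 2^k · ((n/2)! / (n/2 − k)!) · ((n − 2k)! / n!), and this quantity is at most (e/n)^k; if A is not a matching, then Pr_{M∼ν}[A ⊆ M] = 0. Consequently ν is an (e/n)-spread probability measure on the perfect matchings of K_n. -/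
open Finset

/-- `M` is a perfect matching of the complete graph `K_n`: a set of pairwise
vertex-disjoint 2-element subsets (edges) of `{1,…,n}` covering every vertex. -/
def IsPerfectMatching (n : ℕ) (M : Finset (Finset (Fin n))) : Prop :=
  (∀ e ∈ M, e.card = 2) ∧
  (∀ e ∈ M, ∀ f ∈ M, e ≠ f → Disjoint e f) ∧
  (∀ v : Fin n, ∃ e ∈ M, v ∈ e)

open Classical in
/-- The probability, under the uniform distribution `ν` on perfect matchings of `K_n`,
that a uniformly random perfect matching `M ∼ ν` contains every edge of `A`. -/
noncomputable def pmContainProb (n : ℕ) (A : Finset (Finset (Fin n))) : ℝ :=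
  ((Finset.univ.filter (fun M : Finset (Finset (Fin n)) =>
      IsPerfectMatching n M ∧ A ⊆ M)).card : ℝ) /
  ((Finset.univ.filter (fun M : Finset (Finset (Fin n)) => IsPerfectMatching n M)).card : ℝ)

/-!
If `A` is a matching with `k` edges, the perfect matchings of `K_n` containing `A` correspond to the
perfect matchings of the `n - 2k` vertices that `A` leaves uncovered. Choosing the partner of a
fixed vertex shows that `2m` vertices carry `(2m - 1)‼ = (2m)! / (2^m m!)` perfect matchings, which
gives the exact formula. For the bound, Stirling's estimate `√π ≤ stirlingSeq ≤ e / √2` yields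
`(4t/e)^t t! ≤ (2t)! ≤ 2 (4t/e)^t t!`, and with `m = n/2`, `s = m - k` the claim reduces to
`2 s^s ≤ m^s`. A set of edges that is not a matching lies in no perfect matching, and a matching
has at most `n/2` edges, so every edge set `S` has probability at most `(e/n)^|S|`.
-/

open Real Stirling
open scoped Nat

theorem Nat.factorial_two_mul_eq_doubleFactorial_mul (m : ℕ) :
    (2 * m)! = (2 * m - 1)‼ * (2 ^ m * m !) := by
  cases m with
  | zero => rfl
  | succ m =>
    rw [show 2 * (m + 1) - 1 = 2 * m + 1 by omega, ← Nat.doubleFactorial_two_mul,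
      show 2 * (m + 1) = 2 * m + 1 + 1 by omega, Nat.factorial_eq_mul_doubleFactorial, mul_comm]

theorem exp_one_le_two_mul_sqrt_pi : exp 1 ≤ 2 * √π := by
  rw [← div_le_iff₀' two_pos, le_sqrt' (by positivity)]
  nlinarith [exp_one_lt_d9, exp_pos 1, pi_gt_three]

theorem stirlingSeq_le_exp_one_div_sqrt_two {n : ℕ} (hn : n ≠ 0) :
    stirlingSeq n ≤ exp 1 / √2 := by
  obtain ⟨n, rfl⟩ := Nat.exists_eq_succ_of_ne_zero hn
  simpa [stirlingSeq_one] using stirlingSeq'_antitone (Nat.zero_le n)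

theorem stirlingSeq_le_sqrt_two_mul_stirlingSeq {m n : ℕ} (hm : m ≠ 0) (hn : n ≠ 0) :
    stirlingSeq m ≤ √2 * stirlingSeq n := by
  have h2 : √2 * √2 = 2 := mul_self_sqrt zero_le_two
  calc stirlingSeq m ≤ exp 1 / √2 := stirlingSeq_le_exp_one_div_sqrt_two hm
    _ ≤ 2 * √π / √2 := by gcongr; exact exp_one_le_two_mul_sqrt_pi
    _ = √2 * √π := by field_simp; linarith
    _ ≤ √2 * stirlingSeq n := by gcongr; exact sqrt_pi_le_stirlingSeq hn

theorem factorial_eq_stirlingSeq_mul {n : ℕ} (hn : n ≠ 0) :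
    (n ! : ℝ) = stirlingSeq n * (√(2 * n) * (n / exp 1) ^ n) := by
  rw [stirlingSeq, div_mul_cancel₀]
  positivity

theorem factorial_two_mul_mul_stirlingSeq {t : ℕ} (ht : t ≠ 0) :
    ((2 * t)! : ℝ) * stirlingSeq t =
      √2 * stirlingSeq (2 * t) * ((4 * t / exp 1) ^ t * t !) := by
  rw [factorial_eq_stirlingSeq_mul ht, factorial_eq_stirlingSeq_mul (by positivity)]
  push_cast
  rw [show (2 : ℝ) * (2 * t) = 2 * (2 * t) by ring, sqrt_mul zero_le_two, pow_mul]
  field_simp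
  ring

theorem le_factorial_two_mul (t : ℕ) : (4 * t / exp 1) ^ t * t ! ≤ ((2 * t)! : ℝ) := by
  rcases eq_or_ne t 0 with rfl | ht
  · simp
  have hpos : 0 < stirlingSeq t := (sqrt_pos.2 pi_pos).trans_le (sqrt_pi_le_stirlingSeq ht)
  rw [← mul_le_mul_iff_of_pos_right hpos, factorial_two_mul_mul_stirlingSeq ht, mul_comm]
  gcongr
  exact stirlingSeq_le_sqrt_two_mul_stirlingSeq ht (by positivity)

theorem factorial_two_mul_le (t : ℕ) : ((2 * t)! : ℝ) ≤ 2 * ((4 * t / exp 1) ^ t * t !) := by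
  rcases eq_or_ne t 0 with rfl | ht
  · simp
  have hpos : 0 < stirlingSeq t := (sqrt_pos.2 pi_pos).trans_le (sqrt_pi_le_stirlingSeq ht)
  rw [← mul_le_mul_iff_of_pos_right hpos, factorial_two_mul_mul_stirlingSeq ht]
  calc √2 * stirlingSeq (2 * t) * ((4 * t / exp 1) ^ t * t !)
      ≤ √2 * (√2 * stirlingSeq t) * ((4 * t / exp 1) ^ t * t !) := by
        gcongr; exact stirlingSeq_le_sqrt_two_mul_stirlingSeq (by positivity) ht
    _ = 2 * ((4 * t / exp 1) ^ t * t !) * stirlingSeq t := by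
        rw [← mul_assoc √2 √2, mul_self_sqrt zero_le_two]; ring

theorem two_mul_pow_le_pow {s m : ℕ} (hs : s ≠ 0) (hsm : s < m) :
    2 * (s : ℝ) ^ s ≤ (m : ℝ) ^ s := by
  have hs' : (0 : ℝ) < s := by positivity
  have hsm' : (s : ℝ) + 1 ≤ m := by exact_mod_cast hsm
  have hgap : (0 : ℝ) ≤ (m - s) / s := div_nonneg (by linarith) hs'.le
  have bern := one_add_mul_le_pow (a := ((m : ℝ) - s) / s) (by linarith) s
  calc 2 * (s : ℝ) ^ s ≤ (1 + s * ((m - s) / s)) * s ^ s := by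
        gcongr; field_simp; linarith
    _ ≤ (1 + (m - s) / s) ^ s * s ^ s := mul_le_mul_of_nonneg_right bern (by positivity)
    _ = (m : ℝ) ^ s := by rw [← mul_pow]; field_simp; ring

theorem factorial_two_mul_le_of_lt {s m : ℕ} (hsm : s < m) :
    ((2 * s)! : ℝ) ≤ (4 * m / exp 1) ^ s * s ! := by
  rcases eq_or_ne s 0 with rfl | hs
  · simp
  calc ((2 * s)! : ℝ) ≤ 2 * ((4 * s / exp 1) ^ s * s !) := factorial_two_mul_le s
    _ = 2 * (s : ℝ) ^ s * (4 / exp 1) ^ s * s ! := by rw [mul_div_right_comm, mul_pow]; ring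
    _ ≤ (m : ℝ) ^ s * (4 / exp 1) ^ s * s ! := by gcongr; exact two_mul_pow_le_pow hs hsm
    _ = (4 * m / exp 1) ^ s * s ! := by rw [mul_div_right_comm, mul_pow]; ring

theorem two_pow_mul_factorial_ratio_le {k m : ℕ} (hkm : k ≤ m) :
    2 ^ k * (m ! : ℝ) / (m - k)! * ((2 * (m - k))! / (2 * m)!) ≤ (exp 1 / (2 * m)) ^ k := by
  obtain ⟨s, rfl⟩ := Nat.exists_eq_add_of_le hkm
  rw [Nat.add_sub_cancel_left]
  rcases eq_or_ne k 0 with rfl | hk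
  · simp [div_self, Nat.factorial_ne_zero]
  set x : ℝ := 4 * ((k + s : ℕ) : ℝ) / exp 1
  have hx : 2 * (2 * ((k + s : ℕ) : ℝ)) = exp 1 * x := by
    simp only [x]; field_simp; ring
  rw [div_mul_div_comm, div_pow, div_le_div_iff₀ (by positivity) (by positivity)]
  calc 2 ^ k * ((k + s)! : ℝ) * (2 * s)! * (2 * (k + s : ℕ)) ^ k
      = (2 * (2 * (k + s : ℕ))) ^ k * (2 * s)! * (k + s)! := by simp only [mul_pow]; ring
    _ ≤ (2 * (2 * (k + s : ℕ))) ^ k * (x ^ s * s !) * (k + s)! := by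
        gcongr; exact factorial_two_mul_le_of_lt (by omega)
    _ = exp 1 ^ k * (s ! * (x ^ (k + s) * (k + s)!)) := by rw [hx]; ring
    _ ≤ exp 1 ^ k * (s ! * (2 * (k + s))!) := by gcongr; exact le_factorial_two_mul (k + s)

section Matchings

variable {α : Type*}

def IsMatching (A : Finset (Finset α)) : Prop :=
  (∀ e ∈ A, e.card = 2) ∧ ∀ e ∈ A, ∀ f ∈ A, e ≠ f → Disjoint e f

theorem IsMatching.mono {A B : Finset (Finset α)} (hB : IsMatching B) (h : A ⊆ B) :
    IsMatching A :=
  ⟨fun e he => hB.1 e (h he), fun e he f hf => hB.2 e (h he) f (h hf)⟩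

variable [DecidableEq α]

def IsPerfectMatchingOn (V : Finset α) (M : Finset (Finset α)) : Prop :=
  IsMatching M ∧ M.biUnion id = V

theorem IsMatching.card_biUnion {A : Finset (Finset α)} (hA : IsMatching A) :
    (A.biUnion id).card = 2 * A.card := by
  rw [Finset.card_biUnion (t := id) hA.2, mul_comm]
  exact sum_const_nat hA.1

theorem isMatching_singleton_pair {v w : α} (h : v ≠ w) : IsMatching {({v, w} : Finset α)} :=
  ⟨by simpa using card_pair h, by simp⟩

theorem IsPerfectMatchingOn.sdiff {V : Finset α} {A M : Finset (Finset α)}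
    (hM : IsPerfectMatchingOn V M) (hAM : A ⊆ M) :
    IsPerfectMatchingOn (V \ A.biUnion id) (M \ A) := by
  obtain ⟨hmat, rfl⟩ := hM
  refine ⟨hmat.mono sdiff_subset, ?_⟩
  ext v
  simp only [mem_biUnion, mem_sdiff, id, not_exists, not_and]
  constructor
  · rintro ⟨e, ⟨heM, heA⟩, hve⟩
    refine ⟨⟨e, heM, hve⟩, fun f hfA hvf => ?_⟩
    exact disjoint_left.1 (hmat.2 e heM f (hAM hfA) (fun h => heA (h ▸ hfA))) hve hvf
  · rintro ⟨⟨e, heM, hve⟩, hvA⟩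
    exact ⟨e, ⟨heM, fun heA => hvA e heA hve⟩, hve⟩

theorem IsPerfectMatchingOn.union {V : Finset α} {A M : Finset (Finset α)} (hA : IsMatching A)
    (hAV : A.biUnion id ⊆ V) (hM : IsPerfectMatchingOn (V \ A.biUnion id) M) :
    IsPerfectMatchingOn V (M ∪ A) := by
  obtain ⟨hmat, hcov⟩ := hM
  have hdisj : ∀ e ∈ M, ∀ f ∈ A, Disjoint e f := fun e he f hf =>
    have heV : e ⊆ V \ A.biUnion id := hcov ▸ subset_biUnion_of_mem id he
    (sdiff_disjoint.mono_left heV).mono_right (subset_biUnion_of_mem id hf)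
  refine ⟨⟨fun e he => ?_, fun e he f hf hef => ?_⟩, ?_⟩
  · rcases mem_union.1 he with he | he
    exacts [hmat.1 e he, hA.1 e he]
  · rcases mem_union.1 he with he | he <;> rcases mem_union.1 hf with hf | hf
    exacts [hmat.2 e he f hf hef, hdisj e he f hf, (hdisj f hf e he).symm, hA.2 e he f hf hef]
  · rw [union_biUnion, hcov, sdiff_union_of_subset hAV]

theorem IsPerfectMatchingOn.existsUnique_pair_mem {V : Finset α} {M : Finset (Finset α)}
    (hM : IsPerfectMatchingOn V M) {v : α} (hv : v ∈ V) :
    ∃! w, w ∈ V.erase v ∧ {v, w} ∈ M := by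
  obtain ⟨⟨hcard, hdisj⟩, rfl⟩ := hM
  obtain ⟨e, heM, hve : v ∈ e⟩ := mem_biUnion.1 hv
  have herase : (e.erase v).card = 1 := by rw [card_erase_of_mem hve, hcard e heM]
  obtain ⟨w, hw⟩ := card_eq_one.1 herase
  have he : e = {v, w} := by rw [← insert_erase hve, hw]
  have hwe : w ∈ e.erase v := hw ▸ mem_singleton_self w
  refine ⟨w, ⟨mem_erase.2 ⟨ne_of_mem_erase hwe, mem_biUnion.2 ⟨e, heM, mem_of_mem_erase hwe⟩⟩,
    he ▸ heM⟩, ?_⟩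
  rintro u ⟨huV, hu⟩
  have hue : {v, u} = e := by
    by_contra hne
    exact disjoint_left.1 (hdisj _ hu e heM hne) (mem_insert_self v {u}) hve
  have : u ∈ ({v, w} : Finset α) := he ▸ hue ▸ mem_insert_of_mem (mem_singleton_self u)
  simpa [ne_of_mem_erase huV] using this

variable [Fintype α]

theorem IsMatching.two_mul_card_le {A : Finset (Finset α)} (hA : IsMatching A) :
    2 * A.card ≤ Fintype.card α :=
  hA.card_biUnion ▸ card_le_univ _

open Classical in
noncomputable def perfectMatchingsOn (V : Finset α) : Finset (Finset (Finset α)) :=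
  univ.filter (IsPerfectMatchingOn V)

theorem mem_perfectMatchingsOn {V : Finset α} {M : Finset (Finset α)} :
    M ∈ perfectMatchingsOn V ↔ IsPerfectMatchingOn V M := by
  simp [perfectMatchingsOn]

theorem card_filter_superset_perfectMatchingsOn {V : Finset α} {A : Finset (Finset α)}
    (hA : IsMatching A) (hAV : A.biUnion id ⊆ V) :
    ((perfectMatchingsOn V).filter (A ⊆ ·)).card =
      (perfectMatchingsOn (V \ A.biUnion id)).card := by
  refine card_bij' (fun M _ => M \ A) (fun M _ => M ∪ A) (fun M hM => ?_) (fun M hM => ?_)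
    (fun M hM => sdiff_union_of_subset (mem_filter.1 hM).2) (fun M hM => ?_)
  · obtain ⟨hM, hAM⟩ := mem_filter.1 hM
    exact mem_perfectMatchingsOn.2 ((mem_perfectMatchingsOn.1 hM).sdiff hAM)
  · exact mem_filter.2 ⟨mem_perfectMatchingsOn.2 ((mem_perfectMatchingsOn.1 hM).union hA hAV),
      subset_union_right⟩
  · refine union_sdiff_cancel_right (disjoint_left.2 fun e heM heA => ?_)
    have heV : e ⊆ V \ A.biUnion id :=
      (mem_perfectMatchingsOn.1 hM).2 ▸ subset_biUnion_of_mem id heM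
    obtain ⟨x, hx⟩ := card_pos.1 (by rw [hA.1 e heA]; norm_num)
    exact (mem_sdiff.1 (heV hx)).2 (mem_biUnion.2 ⟨e, heA, hx⟩)

theorem card_perfectMatchingsOn_eq_sum {V : Finset α} {v : α} (hv : v ∈ V) :
    (perfectMatchingsOn V).card = ∑ w ∈ V.erase v, (perfectMatchingsOn (V \ {v, w})).card := by
  let r : Finset (Finset α) → α → Prop := fun M w => {v, w} ∈ M
  calc (perfectMatchingsOn V).card
      = ∑ M ∈ perfectMatchingsOn V, ((V.erase v).bipartiteAbove r M).card := by
        refine card_eq_sum_ones _ |>.trans (sum_congr rfl fun M hM => ?_)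
        refine (card_eq_one_iff_existsUnique.2 ?_).symm
        simpa [bipartiteAbove, r] using
          (mem_perfectMatchingsOn.1 hM).existsUnique_pair_mem hv
    _ = ∑ w ∈ V.erase v, ((perfectMatchingsOn V).bipartiteBelow r w).card :=
        sum_card_bipartiteAbove_eq_sum_card_bipartiteBelow r
    _ = _ := by
        refine sum_congr rfl fun w hw => ?_
        have hvw : v ≠ w := (ne_of_mem_erase hw).symm
        have hvwV : ({{v, w}} : Finset (Finset α)).biUnion id ⊆ V := by
          simpa [insert_subset_iff] using ⟨hv, mem_of_mem_erase hw⟩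
        have := card_filter_superset_perfectMatchingsOn (isMatching_singleton_pair hvw) hvwV
        rw [singleton_biUnion, id] at this
        rw [← this]
        congr 1
        ext M
        simp [bipartiteBelow, r]

theorem perfectMatchingsOn_empty : perfectMatchingsOn (∅ : Finset α) = {∅} := by
  ext M
  rw [mem_perfectMatchingsOn, mem_singleton]
  constructor
  · rintro ⟨⟨hcard, -⟩, hcov⟩
    refine eq_empty_of_forall_notMem fun e he => ?_
    have : e = ∅ := subset_empty.1 (hcov ▸ subset_biUnion_of_mem id he)
    simpa [this] using hcard e he
  · rintro rfl
    exact ⟨⟨by simp, by simp⟩, by simp⟩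

theorem card_perfectMatchingsOn {m : ℕ} {V : Finset α} (hV : V.card = 2 * m) :
    (perfectMatchingsOn V).card = (2 * m - 1)‼ := by
  induction m generalizing V with
  | zero => simp [card_eq_zero.1 hV, perfectMatchingsOn_empty]
  | succ m ih =>
    obtain ⟨v, hv⟩ := card_pos.1 (by omega : 0 < V.card)
    have hcard : ∀ w ∈ V.erase v, (perfectMatchingsOn (V \ {v, w})).card = (2 * m - 1)‼ := by
      intro w hw
      refine ih ?_
      rw [card_sdiff_of_subset (insert_subset hv (singleton_subset_iff.2 (mem_of_mem_erase hw))),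
        card_pair (ne_of_mem_erase hw).symm, hV]
      omega
    rw [card_perfectMatchingsOn_eq_sum hv, sum_const_nat hcard, card_erase_of_mem hv, hV,
      show 2 * (m + 1) - 1 = 2 * m + 1 by omega, Nat.doubleFactorial_add_one]

end Matchings

theorem isPerfectMatching_iff_isPerfectMatchingOn_univ {n : ℕ} {M : Finset (Finset (Fin n))} :
    IsPerfectMatching n M ↔ IsPerfectMatchingOn univ M := by
  simp [IsPerfectMatching, IsPerfectMatchingOn, IsMatching, eq_univ_iff_forall, and_assoc]

theorem pmContainProb_eq_card_div (n : ℕ) (A : Finset (Finset (Fin n))) :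
    pmContainProb n A = ((perfectMatchingsOn univ).filter (A ⊆ ·)).card /
      (perfectMatchingsOn (univ : Finset (Fin n))).card := by
  rw [pmContainProb]
  congr 3 <;> ext M <;>
    simp [mem_perfectMatchingsOn, isPerfectMatching_iff_isPerfectMatchingOn_univ]

theorem pmContainProb_eq_zero {n : ℕ} {A : Finset (Finset (Fin n))} (hA : ¬ IsMatching A) :
    pmContainProb n A = 0 := by
  rw [pmContainProb_eq_card_div, filter_eq_empty_iff.2 fun M hM hAM =>
    hA ((mem_perfectMatchingsOn.1 hM).1.mono hAM)]
  simp

theorem pmContainProb_eq {n : ℕ} {A : Finset (Finset (Fin n))} (hn : Even n) (hA : IsMatching A) :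
    pmContainProb n A = 2 ^ A.card * ((n / 2)! : ℝ) / (n / 2 - A.card)! *
      ((n - 2 * A.card)! / n !) := by
  obtain ⟨m, rfl⟩ := hn.two_dvd
  have hk := hA.two_mul_card_le
  rw [Fintype.card_fin] at hk
  have hcompl : (univ \ A.biUnion id).card = 2 * (m - A.card) := by
    rw [card_sdiff_of_subset (subset_univ _), hA.card_biUnion, card_univ, Fintype.card_fin]
    omega
  have hpow : (2 : ℝ) ^ m = 2 ^ A.card * 2 ^ (m - A.card) := by
    rw [← pow_add, Nat.add_sub_cancel' (by omega)]
  rw [pmContainProb_eq_card_div, card_filter_superset_perfectMatchingsOn hA (subset_univ _),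
    card_perfectMatchingsOn hcompl, card_perfectMatchingsOn (m := m) (by simp),
    Nat.mul_div_cancel_left _ two_pos, ← Nat.mul_sub,
    Nat.factorial_two_mul_eq_doubleFactorial_mul, Nat.factorial_two_mul_eq_doubleFactorial_mul m]
  push_cast
  rw [hpow]
  field_simp

theorem pmContainProb_le {n : ℕ} {A : Finset (Finset (Fin n))} (hn : Even n) (hA : IsMatching A) :
    pmContainProb n A ≤ (exp 1 / n) ^ A.card := by
  rw [pmContainProb_eq hn hA]
  obtain ⟨m, rfl⟩ := hn.two_dvd
  have hk := hA.two_mul_card_le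
  rw [Fintype.card_fin] at hk
  rw [Nat.mul_div_cancel_left _ two_pos, ← Nat.mul_sub]
  exact_mod_cast two_pow_mul_factorial_ratio_le (by omega : A.card ≤ m)

theorem spread_uniform_perfect_matchings_general (n : ℕ) (hne : Even n) :
    (∀ (k : ℕ) (A : Finset (Finset (Fin n))), 1 ≤ k → k ≤ n / 2 → A.card = k →
      (∀ e ∈ A, e.card = 2) →
      ((∀ e ∈ A, ∀ f ∈ A, e ≠ f → Disjoint e f) →
        pmContainProb n A =
          2 ^ k * ((n / 2).factorial : ℝ) / ((n / 2 - k).factorial : ℝ) *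
            (((n - 2 * k).factorial : ℝ) / (n.factorial : ℝ)) ∧
        pmContainProb n A ≤ (Real.exp 1 / n) ^ k) ∧
      (¬ (∀ e ∈ A, ∀ f ∈ A, e ≠ f → Disjoint e f) → pmContainProb n A = 0)) ∧
    (∀ S : Finset (Finset (Fin n)), (∀ e ∈ S, e.card = 2) →
      pmContainProb n S ≤ 2 * (Real.exp 1 / n) ^ S.card) := by
  refine ⟨fun k A _ _ hk hcard => ⟨fun hdisj => ?_, fun hdisj =>
    pmContainProb_eq_zero fun hA => hdisj hA.2⟩, fun S hcard => ?_⟩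
  · subst hk
    exact ⟨pmContainProb_eq hne ⟨hcard, hdisj⟩, pmContainProb_le hne ⟨hcard, hdisj⟩⟩
  · by_cases hdisj : ∀ e ∈ S, ∀ f ∈ S, e ≠ f → Disjoint e f
    · exact (pmContainProb_le hne ⟨hcard, hdisj⟩).trans
        (le_mul_of_one_le_left (by positivity) one_le_two)
    · rw [pmContainProb_eq_zero fun hS => hdisj hS.2]
      positivity

/-- Spreadness of the uniform distribution on perfect matchings of `K_n`:
if `A` is a matching of size `k` then `Pr[A ⊆ M] = 2^k · (n/2)!/(n/2−k)! · (n−2k)!/n!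
≤ (e/n)^k`; if `A` is not a matching then `Pr[A ⊆ M] = 0`. Consequently the uniform
distribution is `(e/n)`-spread. -/
theorem spread_uniform_perfect_matchings (n : ℕ) (hn2 : 2 ≤ n) (hne : Even n) :
    (∀ (k : ℕ) (A : Finset (Finset (Fin n))), 1 ≤ k → k ≤ n / 2 → A.card = k →
      (∀ e ∈ A, e.card = 2) →
      ((∀ e ∈ A, ∀ f ∈ A, e ≠ f → Disjoint e f) →
        pmContainProb n A =
          2 ^ k * ((n / 2).factorial : ℝ) / ((n / 2 - k).factorial : ℝ) *
            (((n - 2 * k).factorial : ℝ) / (n.factorial : ℝ)) ∧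
        pmContainProb n A ≤ (Real.exp 1 / n) ^ k) ∧
      (¬ (∀ e ∈ A, ∀ f ∈ A, e ≠ f → Disjoint e f) → pmContainProb n A = 0)) ∧
    (∀ S : Finset (Finset (Fin n)), (∀ e ∈ S, e.card = 2) →
      pmContainProb n S ≤ 2 * (Real.exp 1 / n) ^ S.card) :=
  spread_uniform_perfect_matchings_general n hne
end

section
/- Scaling window for isolated vertices: Fix c ∈ ℝ and let p = p(n) = (log n + c)/n. Then the probability that G(n,p) has no isolated vertex converges, as n → ∞, to exp(−e^{−c}). -/
open Finset Filter

/-- The possible edges of a graph on `{1,…,n}`: the 2-element subsets. -/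
abbrev GEdge (n : ℕ) := {s : Finset (Fin n) // s.card = 2}

open Classical in
/-- The probability that the Erdős–Rényi random graph `G(n,p)`, in which each of the
`binom(n,2)` possible edges is present independently with probability `p`, satisfies
the property `P` (a graph is identified with its set of edges). -/
noncomputable def gprob (n : ℕ) (p : ℝ) (P : Finset (GEdge n) → Prop) : ℝ :=
  ∑ S : Finset (GEdge n),
    if P S then p ^ S.card * (1 - p) ^ (Fintype.card (GEdge n) - S.card) else 0

open Topology

/-!
Let `X` be the number of isolated vertices. A `k`-set of vertices is isolated exactly when none
of the `C(n,2) - C(n-k,2)` edges meeting it is present, so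
`E[C(X,k)] = C(n,k) (1-p)^(C(n,2)-C(n-k,2))`; for `p = (log n + c)/n` this tends to
`e^{-kc}/k!`, because `n (1-p)^n → e^{-c}`. The Bonferroni inequalities trap `P(X = 0)` between
consecutive alternating sums `∑_{k ≤ t} (-1)^k E[C(X,k)]`, whose limits are the partial sums of
the exponential series of `exp (-e^{-c})`.
-/

theorem tendsto_of_iterated_squeeze {α β γ : Type*} [TopologicalSpace γ] [LinearOrder γ]
    [OrderTopology γ] {f : Filter α} {g : Filter β} [g.NeBot] {u : α → γ}
    {lo hi : β → α → γ} {Lo Hi : β → γ} {a : γ}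
    (hlo : ∀ t, Tendsto (lo t) f (𝓝 (Lo t))) (hhi : ∀ t, Tendsto (hi t) f (𝓝 (Hi t)))
    (hLo : Tendsto Lo g (𝓝 a)) (hHi : Tendsto Hi g (𝓝 a))
    (hbetween : ∀ t, ∀ᶠ x in f, lo t x ≤ u x ∧ u x ≤ hi t x) :
    Tendsto u f (𝓝 a) := by
  refine tendsto_order.2 ⟨fun b hb => ?_, fun b hb => ?_⟩
  · obtain ⟨t, ht⟩ := (hLo.eventually (lt_mem_nhds hb)).exists
    filter_upwards [(hlo t).eventually (lt_mem_nhds ht), hbetween t] with x hx hx'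
    exact hx.trans_le hx'.1
  · obtain ⟨t, ht⟩ := (hHi.eventually (gt_mem_nhds hb)).exists
    filter_upwards [(hhi t).eventually (gt_mem_nhds ht), hbetween t] with x hx hx'
    exact hx'.2.trans_lt hx

theorem Int.alternating_sum_range_choose_bounds (m t : ℕ) :
    ∑ k ∈ Finset.range (2 * t + 2), ((-1) ^ k * m.choose k : ℤ)
        ≤ (if m = 0 then 1 else 0) ∧
      (if m = 0 then 1 else 0) ≤
        ∑ k ∈ Finset.range (2 * t + 1), ((-1) ^ k * m.choose k : ℤ) := by
  cases m with
  | zero => simp [Finset.sum_range_succ']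
  | succ m =>
    rw [show 2 * t + 2 = 2 * t + 1 + 1 from rfl, Int.alternating_sum_range_choose_eq_choose,
      Int.alternating_sum_range_choose_eq_choose, (odd_two_mul_add_one t).neg_one_pow,
      (even_two_mul t).neg_one_pow]
    simp

theorem sum_alternating_sum_mul_choose_bounds {α : Type*} {s : Finset α} {w : α → ℝ}
    (hw : ∀ a ∈ s, 0 ≤ w a) (m : α → ℕ) (t : ℕ) :
    ∑ k ∈ range (2 * t + 2), (-1) ^ k * ∑ a ∈ s, w a * (m a).choose k
        ≤ ∑ a ∈ s with m a = 0, w a ∧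
      ∑ a ∈ s with m a = 0, w a
        ≤ ∑ k ∈ range (2 * t + 1), (-1) ^ k * ∑ a ∈ s, w a * (m a).choose k := by
  have hswap : ∀ r, ∑ k ∈ range r, (-1) ^ k * ∑ a ∈ s, w a * (m a).choose k
      = ∑ a ∈ s, w a * (∑ k ∈ range r, (-1) ^ k * ((m a).choose k : ℤ) : ℤ) := by
    intro r
    simp only [mul_sum, Int.cast_sum, Int.cast_mul, Int.cast_pow, Int.cast_neg, Int.cast_one,
      Int.cast_natCast]
    rw [sum_comm]
    exact sum_congr rfl fun a _ => sum_congr rfl fun k _ => by ring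
  have hfilter : ∑ a ∈ s with m a = 0, w a
      = ∑ a ∈ s, w a * ((if m a = 0 then 1 else 0 : ℤ) : ℝ) := by
    rw [sum_filter]
    refine sum_congr rfl fun a _ => ?_
    split_ifs <;> simp
  rw [hswap, hswap, hfilter]
  constructor <;> refine sum_le_sum fun a ha => mul_le_mul_of_nonneg_left ?_ (hw a ha)
  · exact_mod_cast (Int.alternating_sum_range_choose_bounds (m a) t).1
  · exact_mod_cast (Int.alternating_sum_range_choose_bounds (m a) t).2

theorem sum_mul_choose_card_eq_sum_powersetCard {α V R : Type*} [Fintype V] [DecidableEq V]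
    [CommSemiring R] (s : Finset α) (w : α → R) (F : α → Finset V) (k : ℕ) :
    ∑ a ∈ s, w a * (#(F a)).choose k
      = ∑ A ∈ powersetCard k univ, ∑ a ∈ s with A ⊆ F a, w a := by
  have hcount : ∀ a, (powersetCard k univ).filter (· ⊆ F a) = powersetCard k (F a) := by
    intro a
    ext A
    simp only [mem_filter, mem_powersetCard, subset_univ, true_and]
    tauto
  simp only [sum_filter]
  rw [sum_comm]
  refine sum_congr rfl fun a _ => ?_
  rw [← sum_filter, hcount, sum_const, card_powersetCard, nsmul_eq_mul, mul_comm]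

section Bernoulli

variable {ι : Type*} [Fintype ι]

def bernoulliWeight (p : ℝ) (S : Finset ι) : ℝ := p ^ #S * (1 - p) ^ (Fintype.card ι - #S)

theorem bernoulliWeight_nonneg {p : ℝ} (hp₀ : 0 ≤ p) (hp₁ : p ≤ 1) (S : Finset ι) :
    0 ≤ bernoulliWeight p S :=
  mul_nonneg (pow_nonneg hp₀ _) (pow_nonneg (sub_nonneg.2 hp₁) _)

theorem sum_bernoulliWeight_disjoint [DecidableEq ι] (p : ℝ) (T : Finset ι) :
    ∑ S with Disjoint S T, bernoulliWeight p S = (1 - p) ^ #T := by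
  have hset : ({S | Disjoint S T} : Finset (Finset ι)) = Tᶜ.powerset := by
    ext S
    simp [subset_compl_iff_disjoint_right]
  have hsplit : ∀ S ∈ Tᶜ.powerset, bernoulliWeight p S
      = (1 - p) ^ #T * (p ^ #S * (1 - p) ^ (#Tᶜ - #S)) := by
    intro S hS
    have hcard : #S ≤ #Tᶜ := card_le_card (mem_powerset.1 hS)
    rw [card_compl] at hcard ⊢
    rw [bernoulliWeight, mul_left_comm, ← pow_add]
    congr 2
    have := card_le_univ T
    omega
  rw [hset, sum_congr rfl hsplit, ← mul_sum, sum_pow_mul_eq_add_pow, add_sub_cancel, one_pow,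
    mul_one]

end Bernoulli

section Isolated

variable {n : ℕ}

def isolatedVertices (S : Finset (GEdge n)) : Finset (Fin n) := {v | ∀ e ∈ S, v ∉ e.val}

def incidentEdges (A : Finset (Fin n)) : Finset (GEdge n) := {e | ¬ Disjoint e.val A}

theorem subset_isolatedVertices_iff {A : Finset (Fin n)} {S : Finset (GEdge n)} :
    A ⊆ isolatedVertices S ↔ Disjoint S (incidentEdges A) := by
  simp only [isolatedVertices, incidentEdges, subset_iff, mem_filter, mem_univ, true_and,
    disjoint_left, not_not]
  tauto

theorem card_incidentEdges (A : Finset (Fin n)) :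
    #(incidentEdges A) = n.choose 2 - (n - #A).choose 2 := by
  have hdisj : ({e | Disjoint e.val A} : Finset (GEdge n)).map (Function.Embedding.subtype _)
      = powersetCard 2 Aᶜ := by
    ext s
    simp [mem_powersetCard, subset_compl_iff_disjoint_right, and_comm]
  have hcard := card_map (s := ({e | Disjoint e.val A} : Finset (GEdge n)))
    (Function.Embedding.subtype _)
  rw [hdisj, card_powersetCard, card_compl, Fintype.card_fin] at hcard
  rw [incidentEdges, filter_not, card_sdiff_of_subset (subset_univ _), ← hcard, card_univ,
    Fintype.card_finset_len, Fintype.card_fin]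

theorem sum_bernoulliWeight_mul_choose_card_isolatedVertices (p : ℝ) (k : ℕ) :
    ∑ S : Finset (GEdge n), bernoulliWeight p S * (#(isolatedVertices S)).choose k
      = n.choose k * (1 - p) ^ (n.choose 2 - (n - k).choose 2) := by
  rw [sum_mul_choose_card_eq_sum_powersetCard]
  calc ∑ A ∈ powersetCard k univ, ∑ S with A ⊆ isolatedVertices S, bernoulliWeight p S
      = ∑ A ∈ powersetCard k (univ : Finset (Fin n)),
          (1 - p) ^ (n.choose 2 - (n - k).choose 2) := by
        refine sum_congr rfl fun A hA => ?_
        simp only [subset_isolatedVertices_iff, sum_bernoulliWeight_disjoint, card_incidentEdges,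
          (mem_powersetCard.1 hA).2]
    _ = _ := by rw [sum_const, card_powersetCard, card_univ, Fintype.card_fin, nsmul_eq_mul]

theorem gprob_no_isolated_eq (p : ℝ) :
    gprob n p (fun S => ∀ v : Fin n, ∃ e ∈ S, v ∈ e.val)
      = ∑ S : Finset (GEdge n) with #(isolatedVertices S) = 0, bernoulliWeight p S := by
  rw [gprob, sum_filter]
  refine sum_congr rfl fun S _ => ?_
  simp [isolatedVertices, filter_eq_empty_iff, bernoulliWeight]

theorem gprob_no_isolated_bounds {p : ℝ} (hp₀ : 0 ≤ p) (hp₁ : p ≤ 1) (t : ℕ) :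
    ∑ k ∈ range (2 * t + 2), (-1) ^ k * (n.choose k * (1 - p) ^ (n.choose 2 - (n - k).choose 2))
        ≤ gprob n p (fun S => ∀ v : Fin n, ∃ e ∈ S, v ∈ e.val) ∧
      gprob n p (fun S => ∀ v : Fin n, ∃ e ∈ S, v ∈ e.val)
        ≤ ∑ k ∈ range (2 * t + 1),
            (-1) ^ k * (n.choose k * (1 - p) ^ (n.choose 2 - (n - k).choose 2)) := by
  simp only [← sum_bernoulliWeight_mul_choose_card_isolatedVertices, gprob_no_isolated_eq]
  exact sum_alternating_sum_mul_choose_bounds (fun S _ => bernoulliWeight_nonneg hp₀ hp₁ S) _ t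

end Isolated

theorem Nat.choose_two_sub_choose_two_add_choose_two {n k : ℕ} (h : k ≤ n) :
    n.choose 2 - (n - k).choose 2 + (k + 1).choose 2 = n * k := by
  have hle : (n - k).choose 2 ≤ n.choose 2 := Nat.choose_le_choose 2 (Nat.sub_le n k)
  qify [hle, h]
  simp only [Nat.cast_choose_two, Nat.cast_sub h, Nat.cast_add, Nat.cast_one]
  ring

section Asymptotics

variable {p : ℕ → ℝ}

theorem tendsto_zero_of_tendsto_nat_mul_sq
    (hp : Tendsto (fun n : ℕ => n * p n ^ 2) atTop (𝓝 0)) :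
    Tendsto p atTop (𝓝 0) := by
  have h := (Real.continuous_sqrt.tendsto 0).comp
    (ProbabilityTheory.tendsto_zero_of_tendsto_mul_atTop hp)
  simp only [Function.comp_def, Real.sqrt_sq_eq_abs, Real.sqrt_zero] at h
  exact (tendsto_zero_iff_abs_tendsto_zero p).2 h

theorem tendsto_one_sub_mul_exp_pow (hp : Tendsto (fun n : ℕ => n * p n ^ 2) atTop (𝓝 0)) :
    Tendsto (fun n => ((1 - p n) * Real.exp (p n)) ^ n) atTop (𝓝 1) := by
  have hp₁ : ∀ᶠ n in atTop, p n ≤ 1 :=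
    (tendsto_zero_of_tendsto_nat_mul_sq hp).eventually_le_const one_pos
  -- `1 - p ^ 2 ≤ (1 - p) * exp p ≤ 1`
  have hsq : Tendsto (fun n : ℕ => n * ((1 - p n) * Real.exp (p n) - 1)) atTop (𝓝 0) := by
    refine tendsto_of_tendsto_of_tendsto_of_le_of_le' (by simpa using hp.neg) tendsto_const_nhds
      ?_ ?_
    · filter_upwards [hp₁] with n hn
      have : 1 - p n ^ 2 ≤ (1 - p n) * Real.exp (p n) := by
        nlinarith [Real.add_one_le_exp (p n)]
      rw [← mul_neg]
      exact mul_le_mul_of_nonneg_left (by linarith) n.cast_nonneg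
    · refine Eventually.of_forall fun n => mul_nonpos_of_nonneg_of_nonpos n.cast_nonneg ?_
      have h := mul_le_mul_of_nonneg_right (Real.one_sub_le_exp_neg (p n)) (Real.exp_pos (p n)).le
      rw [← Real.exp_add, neg_add_cancel, Real.exp_zero] at h
      linarith
  simpa using Real.tendsto_one_add_pow_exp_of_tendsto hsq

theorem tendsto_mul_one_sub_pow {c : ℝ}
    (hc : Tendsto (fun n : ℕ => n * p n - Real.log n) atTop (𝓝 c))
    (hp : Tendsto (fun n : ℕ => n * p n ^ 2) atTop (𝓝 0)) :
    Tendsto (fun n : ℕ => n * (1 - p n) ^ n) atTop (𝓝 (Real.exp (-c))) := by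
  -- `n (1 - p) ^ n = exp (-(n p - log n)) * ((1 - p) * exp p) ^ n`
  have hlim := ((Real.continuous_exp.tendsto _).comp hc.neg).mul (tendsto_one_sub_mul_exp_pow hp)
  rw [mul_one] at hlim
  refine hlim.congr' ?_
  filter_upwards [eventually_gt_atTop 0] with n hn
  have hn : (0 : ℝ) < n := by exact_mod_cast hn
  simp only [Function.comp, mul_pow, ← Real.exp_nat_mul, neg_sub, Real.exp_sub, Real.exp_log hn]
  field_simp

theorem tendsto_choose_mul_one_sub_pow_choose_two_sub {c : ℝ}
    (hc : Tendsto (fun n : ℕ => n * p n - Real.log n) atTop (𝓝 c))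
    (hp : Tendsto (fun n : ℕ => n * p n ^ 2) atTop (𝓝 0)) (k : ℕ) :
    Tendsto (fun n : ℕ => n.choose k * (1 - p n) ^ (n.choose 2 - (n - k).choose 2)) atTop
      (𝓝 (Real.exp (-c) ^ k / k.factorial)) := by
  have hp₀ := tendsto_zero_of_tendsto_nat_mul_sq hp
  have hpow : Tendsto (fun n => (1 - p n) ^ (k + 1).choose 2) atTop (𝓝 1) := by
    simpa using ((tendsto_const_nhds (x := (1 : ℝ))).sub hp₀).pow ((k + 1).choose 2)
  have hlim := (ProbabilityTheory.tendsto_choose_mul_pow_atTop k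
    (tendsto_mul_one_sub_pow hc hp)).div hpow one_ne_zero
  rw [div_one] at hlim
  refine hlim.congr' ?_
  filter_upwards [eventually_ge_atTop k, hp₀.eventually_lt_const one_pos] with n hkn hpn
  rw [Pi.div_apply, eq_comm, eq_div_iff (pow_ne_zero _ (sub_ne_zero.2 hpn.ne')), mul_assoc,
    ← pow_add, ← pow_mul, Nat.choose_two_sub_choose_two_add_choose_two hkn]

end Asymptotics

theorem tendsto_mul_log_add_div_sub_log (c : ℝ) :
    Tendsto (fun n : ℕ => n * ((Real.log n + c) / n) - Real.log n) atTop (𝓝 c) :=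
  tendsto_const_nhds.congr' <| by
    filter_upwards [eventually_ne_atTop 0] with n hn
    field_simp
    ring

theorem tendsto_mul_log_add_div_sq (c : ℝ) :
    Tendsto (fun n : ℕ => n * ((Real.log n + c) / n) ^ 2) atTop (𝓝 0) := by
  have hx : Tendsto (fun x : ℝ => (Real.log x ^ 2 + 2 * c * Real.log x + c ^ 2) / x) atTop
      (𝓝 0) := by
    have h₂ := Real.tendsto_pow_log_div_mul_add_atTop 1 0 2 one_ne_zero
    have h₁ := Real.tendsto_pow_log_div_mul_add_atTop 1 0 1 one_ne_zero
    have h₀ := tendsto_const_nhds (x := c ^ 2).div_atTop tendsto_id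
    simp only [one_mul, add_zero, pow_one] at h₂ h₁
    simpa [add_div, mul_div_assoc] using (h₂.add (h₁.const_mul (2 * c))).add h₀
  refine (hx.comp tendsto_natCast_atTop_atTop).congr' ?_
  filter_upwards [eventually_ne_atTop 0] with n hn
  simp only [Function.comp]
  field_simp
  ring

theorem tendsto_sum_range_pow_div_factorial (x : ℝ) :
    Tendsto (fun s => ∑ k ∈ range s, x ^ k / k.factorial) atTop (𝓝 (Real.exp x)) := by
  rw [Real.exp_eq_exp_ℝ]
  exact (NormedSpace.expSeries_div_hasSum_exp x).tendsto_sum_nat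

/-- Scaling window for isolated vertices: for fixed `c ∈ ℝ` and `p = (log n + c)/n`,
the probability that `G(n,p)` has no isolated vertex converges to `exp(−e^{−c})`. -/
theorem isolated_vertices_scaling_window (c : ℝ) :
    Tendsto (fun n : ℕ =>
        gprob n ((Real.log n + c) / n)
          (fun S => ∀ v : Fin n, ∃ e ∈ S, v ∈ e.val))
      atTop (nhds (Real.exp (-Real.exp (-c)))) := by
  have hc := tendsto_mul_log_add_div_sub_log c
  have hp := tendsto_mul_log_add_div_sq c
  have hbonferroni : ∀ s, Tendsto (fun n : ℕ => ∑ k ∈ range s, (-1) ^ k *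
      (n.choose k * (1 - (Real.log n + c) / n) ^ (n.choose 2 - (n - k).choose 2))) atTop
      (𝓝 (∑ k ∈ range s, (-Real.exp (-c)) ^ k / k.factorial)) := fun s =>
    tendsto_finsetSum _ fun k _ => by
      rw [neg_pow (Real.exp (-c)), mul_div_assoc]
      exact (tendsto_choose_mul_one_sub_pow_choose_two_sub hc hp k).const_mul _
  have hexp := tendsto_sum_range_pow_div_factorial (-Real.exp (-c))
  have hlog := Real.tendsto_log_atTop.comp tendsto_natCast_atTop_atTop
  refine tendsto_of_iterated_squeeze (g := atTop) (fun t => hbonferroni (2 * t + 2))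
    (fun t => hbonferroni (2 * t + 1))
    (hexp.comp (tendsto_atTop_mono (fun t => show t ≤ 2 * t + 2 by omega) tendsto_id))
    (hexp.comp (tendsto_atTop_mono (fun t => show t ≤ 2 * t + 1 by omega) tendsto_id)) fun t => ?_
  filter_upwards [hlog.eventually_ge_atTop (-c),
    (tendsto_zero_of_tendsto_nat_mul_sq hp).eventually_le_const one_pos] with n hlog_ge hp₁
  have hp₀ : 0 ≤ (Real.log n + c) / n :=
    div_nonneg (neg_le_iff_add_nonneg.1 hlog_ge) n.cast_nonneg
  exact gprob_no_isolated_bounds hp₀ hp₁ t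
end

section
/- Subcritical 3-colorability: For every constant c with 0 < c < 1, with p = c/n the probability that G(n,p) is 3-colorable tends to 1 as n → ∞. (Indeed, with high probability every connected component of G(n,c/n) contains at most one cycle, and such graphs are 3-colorable.) -/
open Finset Filter

/-- The graph on `{1,…,n}` with edge set `S` is 3-colorable: there is a coloring of the
vertices with 3 colors in which no edge has both endpoints of the same color. -/
def ThreeColorable (n : ℕ) (S : Finset (GEdge n)) : Prop :=
  ∃ f : Fin n → Fin 3, ∀ e ∈ S, ∀ u ∈ e.val, ∀ v ∈ e.val, u ≠ v → f u ≠ f v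

/-! A non-3-colorable graph is not 2-degenerate, so it has a nonempty vertex set `s` in which
every vertex has at least three neighbours. A longest path inside `s` then has all neighbours
of its first vertex on it; the two farthest of them close a cycle with a chord. Such a
configuration with `m + 1` vertices has `m + 2` edges, so in `G(n, c/n)` one of them occurs with
probability at most `(m + 1) n^(m+1) (c/n)^(m+2) = (m + 1) c^(m+2) / n`, and summing over `m`
the graph fails to be 3-colorable with probability `O(1/n)`. -/

theorem Fintype.sum_superset_pow_mul_eq {ι R : Type*} [Fintype ι] [DecidableEq ι]
    [CommSemiring R] (A : Finset ι) (a b : R) :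
    ∑ S : Finset ι with A ⊆ S, a ^ #S * b ^ (Fintype.card ι - #S) =
      a ^ #A * (a + b) ^ (Fintype.card ι - #A) := by
  have hsupersets : ({S | A ⊆ S} : Finset (Finset ι)) = (univ \ A).powerset.image (A ∪ ·) := by
    rw [← Icc_eq_image_powerset (subset_univ A)]
    ext S
    simp
  have hdisj : ∀ T ∈ (univ \ A).powerset, Disjoint A T := fun T hT =>
    disjoint_of_subset_right (mem_powerset.1 hT) disjoint_sdiff
  have hinj : Set.InjOn (A ∪ ·) ((univ \ A).powerset : Set (Finset ι)) := by
    intro T hT T' hT' h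
    rw [← union_sdiff_cancel_left (hdisj T hT), ← union_sdiff_cancel_left (hdisj T' hT')]
    exact congrArg (· \ A) h
  rw [hsupersets, sum_image hinj, ← card_univ_sdiff, ← Finset.sum_pow_mul_eq_add_pow, mul_sum]
  refine Finset.sum_congr rfl fun T hT => ?_
  rw [card_union_of_disjoint (hdisj T hT), pow_add, mul_assoc, card_univ_sdiff, Nat.sub_add_eq]

theorem Finset.exists_two_le_lt_of_three_le_card {J : Finset ℕ} (hJ : 3 ≤ #J) (h0 : 0 ∉ J) :
    ∃ i ∈ J, ∃ j ∈ J, 2 ≤ i ∧ i < j := by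
  have hne : J.Nonempty := card_pos.1 (by omega)
  have hcard : 2 ≤ #(J.erase (J.max' hne)) := by rw [card_erase_of_mem (J.max'_mem hne)]; omega
  have hne' : (J.erase (J.max' hne)).Nonempty := card_pos.1 (by omega)
  set j := J.max' hne
  set i := (J.erase j).max' hne'
  have hi : i ∈ J.erase j := max'_mem _ hne'
  refine ⟨i, mem_of_mem_erase hi, j, J.max'_mem hne, ?_, ?_⟩
  · have hsub : J.erase j ⊆ Icc 1 i := fun x hx =>
      mem_Icc.2 ⟨Nat.one_le_iff_ne_zero.2 fun hx0 => h0 (hx0 ▸ mem_of_mem_erase hx),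
        le_max' _ x hx⟩
    simpa using hcard.trans (card_le_card hsub)
  · exact lt_of_le_of_ne (le_max' _ i (mem_of_mem_erase hi)) (ne_of_mem_erase hi)

theorem Finset.pair_eq_pair_iff {α : Type*} [DecidableEq α] {x y z w : α} :
    ({x, y} : Finset α) = {z, w} ↔ x = z ∧ y = w ∨ x = w ∧ y = z := by
  rw [← coe_inj, coe_pair, coe_pair, Set.pair_eq_pair_iff]

theorem List.exists_max_length_of_nodup {V : Type*} [Fintype V] {P : List V → Prop}
    (h : ∃ l, P l) (hnodup : ∀ l, P l → l.Nodup) :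
    ∃ l, P l ∧ ∀ l', P l' → l'.length ≤ l.length := by
  classical
  obtain ⟨l₀, hl₀⟩ := h
  obtain ⟨l, hl, hlen⟩ := Nat.findGreatest_spec (P := fun k => ∃ l, P l ∧ l.length = k)
    (hnodup l₀ hl₀).length_le_card ⟨l₀, hl₀, rfl⟩
  exact ⟨l, hl, fun l' hl' =>
    hlen ▸ Nat.le_findGreatest (hnodup l' hl').length_le_card ⟨l', hl', rfl⟩⟩

namespace SimpleGraph

variable {V : Type*} (G : SimpleGraph V)

theorem exists_coloring_on_of_degenerate [DecidableEq V] [DecidableRel G.Adj] {k : ℕ}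
    (h : ∀ s : Finset V, s.Nonempty → ∃ v ∈ s, #{w ∈ s | G.Adj v w} ≤ k) (s : Finset V) :
    ∃ f : V → Fin (k + 1), ∀ u ∈ s, ∀ v ∈ s, G.Adj u v → f u ≠ f v := by
  induction s using Finset.strongInduction with
  | H s ih =>
    rcases s.eq_empty_or_nonempty with rfl | hs
    · exact ⟨0, by simp⟩
    obtain ⟨u, hu, hdeg⟩ := h s hs
    obtain ⟨f, hf⟩ := ih (s.erase u) (erase_ssubset hu)
    obtain ⟨col, -, hcol⟩ : ∃ col ∈ univ, col ∉ image f {w ∈ s | G.Adj u w} :=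
      exists_mem_notMem_of_card_lt_card ((card_image_le.trans hdeg).trans_lt (by simp))
    have hfree : ∀ w ∈ s, G.Adj u w → col ≠ f w := fun w hw huw hc =>
      hcol (mem_image.2 ⟨w, mem_filter.2 ⟨hw, huw⟩, hc.symm⟩)
    refine ⟨Function.update f u col, fun x hx y hy hxy => ?_⟩
    by_cases hxu : x = u <;> by_cases hyu : y = u
    · exact absurd (hxu.trans hyu.symm) hxy.ne
    · subst hxu
      simpa [hyu] using hfree y hy hxy
    · subst hyu
      simpa [hxu] using (hfree x hx hxy.symm).symm
    · simpa [hxu, hyu] using hf x (mem_erase.2 ⟨hxu, hx⟩) y (mem_erase.2 ⟨hyu, hy⟩) hxy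

theorem colorable_of_degenerate [Fintype V] [DecidableEq V] [DecidableRel G.Adj] {k : ℕ}
    (h : ∀ s : Finset V, s.Nonempty → ∃ v ∈ s, #{w ∈ s | G.Adj v w} ≤ k) :
    G.Colorable (k + 1) := by
  obtain ⟨f, hf⟩ := G.exists_coloring_on_of_degenerate h univ
  exact ⟨Coloring.mk f fun huv => hf _ (mem_univ _) _ (mem_univ _) huv⟩

def IsChordedCycle {m : ℕ} (a : Fin (m + 1) → V) (i : Fin (m + 1)) : Prop :=
  2 ≤ (i : ℕ) ∧ (i : ℕ) < m ∧ (∀ j : Fin m, G.Adj (a j.castSucc) (a j.succ)) ∧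
    G.Adj (a 0) (a (Fin.last m)) ∧ G.Adj (a 0) (a i)

theorem exists_isChordedCycle_of_three_le_degree [Fintype V] [DecidableRel G.Adj]
    {s : Finset V} (hs : s.Nonempty) (hdeg : ∀ v ∈ s, 3 ≤ #{w ∈ s | G.Adj v w}) :
    ∃ (m : ℕ) (a : Fin (m + 1) ↪ V) (i : Fin (m + 1)), G.IsChordedCycle a i := by
  classical
  obtain ⟨v, hv⟩ := hs
  obtain ⟨l, ⟨hnodup, hchain, hls⟩, hmax⟩ := List.exists_max_length_of_nodup
    (P := fun l => l.Nodup ∧ l.IsChain G.Adj ∧ ∀ x ∈ l, x ∈ s)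
    ⟨[v], by simp [hv]⟩ fun l hl => hl.1
  obtain _ | ⟨v₀, t⟩ := l
  · simpa using hmax [v] (by simp [hv])
  have hnbr : ∀ w ∈ s, G.Adj v₀ w → w ∈ v₀ :: t := by
    intro w hw hadj
    by_contra hwl
    have := hmax (w :: v₀ :: t)
      ⟨List.nodup_cons.2 ⟨hwl, hnodup⟩, List.isChain_cons_cons.2 ⟨hadj.symm, hchain⟩,
        by simpa [hw] using hls⟩
    simp at this
  set J : Finset ℕ := {k ∈ range (t.length + 1) | G.Adj v₀ ((v₀ :: t).getD k v₀)}
  have hJ : 3 ≤ #J := by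
    refine (hdeg v₀ (hls v₀ (by simp))).trans (card_le_card_of_surjOn ((v₀ :: t).getD · v₀) ?_)
    intro w hw
    obtain ⟨hws, hadj⟩ := mem_filter.1 hw
    obtain ⟨k, hk, rfl⟩ := List.mem_iff_getElem.1 (hnbr w hws hadj)
    have hget : (v₀ :: t).getD k v₀ = (v₀ :: t)[k] := List.getD_eq_getElem _ _ hk
    exact ⟨k, mem_filter.2 ⟨mem_range.2 hk, hget ▸ hadj⟩, hget⟩
  obtain ⟨i, hi, j, hj, hi2, hij⟩ := exists_two_le_lt_of_three_le_card hJ (by simp [J])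
  obtain ⟨hjlen, hjadj⟩ := mem_filter.1 hj
  obtain ⟨hilen, hiadj⟩ := mem_filter.1 hi
  rw [mem_range] at hilen hjlen
  rw [List.getD_eq_getElem _ _ hjlen] at hjadj
  rw [List.getD_eq_getElem _ _ hilen] at hiadj
  exact ⟨j, (Fin.castLEEmb hjlen).trans
    ⟨fun k => (v₀ :: t)[k], List.nodup_iff_injective_getElem.1 hnodup⟩,
    ⟨i, by omega⟩, hi2, hij, fun k => hchain.getElem k (by simp only [List.length_cons]; omega),
    hjadj, hiadj⟩

theorem exists_isChordedCycle_of_not_colorable [Fintype V] (h : ¬ G.Colorable 3) :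
    ∃ (m : ℕ) (a : Fin (m + 1) ↪ V) (i : Fin (m + 1)), G.IsChordedCycle a i := by
  classical
  obtain ⟨s, hs, hdeg⟩ : ∃ s : Finset V, s.Nonempty ∧ ∀ v ∈ s, 3 ≤ #{w ∈ s | G.Adj v w} := by
    by_contra! hdegenerate
    exact h (G.colorable_of_degenerate fun s hs => by
      obtain ⟨v, hv, hlt⟩ := hdegenerate s hs
      exact ⟨v, hv, by omega⟩)
  exact G.exists_isChordedCycle_of_three_le_degree hs hdeg

end SimpleGraph

def chordedCycleEdges {V : Type*} [DecidableEq V] {m : ℕ} (a : Fin (m + 1) → V)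
    (i : Fin (m + 1)) : Fin m ⊕ Fin 2 → Finset V :=
  Sum.elim (fun j => {a j.castSucc, a j.succ}) ![{a 0, a (Fin.last m)}, {a 0, a i}]

theorem chordedCycleEdges_injective {V : Type*} [DecidableEq V] {m : ℕ} {a : Fin (m + 1) → V}
    (ha : Function.Injective a) {i : Fin (m + 1)} (hi2 : 2 ≤ (i : ℕ)) (him : (i : ℕ) < m) :
    Function.Injective (chordedCycleEdges a i) := by
  rintro (j | j) (k | k) h <;> [skip; fin_cases k; fin_cases j; (fin_cases j <;> fin_cases k)] <;>
    simp only [chordedCycleEdges, Sum.elim_inl, Sum.elim_inr, Fin.zero_eta, Fin.mk_one,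
      Matrix.cons_val_zero, Matrix.cons_val_one, pair_eq_pair_iff, ha.eq_iff, Fin.ext_iff,
      Fin.val_castSucc, Fin.val_succ, Fin.val_zero, Fin.val_last, Sum.inl.injEq, Sum.inr.injEq,
      reduceCtorEq, true_and, and_false, false_and, or_false, Fin.val_one] at h ⊢ <;>
    omega

theorem card_chordedCycleEdges {V : Type*} [DecidableEq V] {m : ℕ} {a : Fin (m + 1) → V}
    (ha : Function.Injective a) {i : Fin (m + 1)} (hi2 : 2 ≤ (i : ℕ)) (him : (i : ℕ) < m)
    (k : Fin m ⊕ Fin 2) : #(chordedCycleEdges a i k) = 2 := by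
  rcases k with j | j <;> [skip; fin_cases j] <;>
    simp only [chordedCycleEdges, Sum.elim_inl, Sum.elim_inr, Fin.zero_eta, Fin.mk_one,
      Matrix.cons_val_zero, Matrix.cons_val_one] <;>
    refine card_pair (ha.ne fun h => ?_) <;> simp [Fin.ext_iff] at h <;> omega

section Probability

variable {n : ℕ} {p : ℝ}

def gprobWeight (n : ℕ) (p : ℝ) (S : Finset (GEdge n)) : ℝ :=
  p ^ #S * (1 - p) ^ (Fintype.card (GEdge n) - #S)

theorem gprobWeight_nonneg (hp0 : 0 ≤ p) (hp1 : p ≤ 1) (S : Finset (GEdge n)) :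
    0 ≤ gprobWeight n p S :=
  mul_nonneg (pow_nonneg hp0 _) (pow_nonneg (sub_nonneg.2 hp1) _)

theorem gprob_eq_sum_filter (P : Finset (GEdge n) → Prop) [DecidablePred P] :
    gprob n p P = ∑ S with P S, gprobWeight n p S := by
  rw [gprob, sum_filter]
  congr!

theorem gprob_nonneg (hp0 : 0 ≤ p) (hp1 : p ≤ 1) (P : Finset (GEdge n) → Prop) :
    0 ≤ gprob n p P := by
  classical
  exact (gprob_eq_sum_filter P).symm ▸ sum_nonneg fun S _ => gprobWeight_nonneg hp0 hp1 S

theorem gprob_eq_zero {P : Finset (GEdge n) → Prop} (h : ∀ S, ¬ P S) : gprob n p P = 0 :=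
  sum_eq_zero fun S _ => if_neg (h S)

theorem gprob_mono (hp0 : 0 ≤ p) (hp1 : p ≤ 1) {P Q : Finset (GEdge n) → Prop}
    (h : ∀ S, P S → Q S) : gprob n p P ≤ gprob n p Q := by
  classical
  rw [gprob_eq_sum_filter, gprob_eq_sum_filter]
  exact sum_le_sum_of_subset_of_nonneg (monotone_filter_right _ fun S _ => h S)
    fun S _ _ => gprobWeight_nonneg hp0 hp1 S

theorem gprob_subset (A : Finset (GEdge n)) : gprob n p (A ⊆ ·) = p ^ #A := by
  classical
  rw [gprob_eq_sum_filter]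
  simp only [gprobWeight, Fintype.sum_superset_pow_mul_eq, add_sub_cancel, one_pow, mul_one]

theorem gprob_forall_exists_val_eq {κ : Type*} [Fintype κ] {F : κ → Finset (Fin n)}
    (hF : Function.Injective F) (hcard : ∀ k, #(F k) = 2) :
    gprob n p (fun S => ∀ k, ∃ e ∈ S, e.val = F k) = p ^ Fintype.card κ := by
  classical
  set edge : κ → GEdge n := fun k => ⟨F k, hcard k⟩
  have hevent : (fun S => ∀ k, ∃ e ∈ S, e.val = F k) = (univ.image edge ⊆ ·) := by
    ext S
    simp only [image_subset_iff, mem_univ, true_implies]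
    exact forall_congr' fun k =>
      ⟨fun ⟨e, he, hval⟩ => (Subtype.ext hval : e = edge k) ▸ he, fun h => ⟨_, h, rfl⟩⟩
  rw [hevent, gprob_subset, card_image_of_injective _ fun k l h => hF (congrArg Subtype.val h),
    card_univ]

theorem gprob_not (P : Finset (GEdge n) → Prop) : gprob n p (¬ P ·) = 1 - gprob n p P := by
  classical
  rw [eq_sub_iff_add_eq, gprob_eq_sum_filter, gprob_eq_sum_filter, add_comm,
    sum_filter_add_sum_filter_not]
  simp only [gprobWeight, Fintype.sum_pow_mul_eq_add_pow, add_sub_cancel, one_pow]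

theorem gprob_exists_le_sum (hp0 : 0 ≤ p) (hp1 : p ≤ 1) {α : Type*} [Fintype α]
    (Q : α → Finset (GEdge n) → Prop) :
    gprob n p (fun S => ∃ x, Q x S) ≤ ∑ x, gprob n p (Q x) := by
  classical
  simp only [gprob_eq_sum_filter, sum_filter]
  rw [sum_comm]
  refine sum_le_sum fun S _ => ?_
  have hterm : ∀ y, 0 ≤ if Q y S then gprobWeight n p S else 0 := fun y => by
    split_ifs <;> simp [gprobWeight_nonneg hp0 hp1]
  split_ifs with h
  · obtain ⟨x, hx⟩ := h
    exact (if_pos hx).symm.le.trans (single_le_sum (fun y _ => hterm y) (mem_univ x))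
  · exact sum_nonneg fun y _ => hterm y

end Probability

def edgeGraph {n : ℕ} (S : Finset (GEdge n)) : SimpleGraph (Fin n) where
  Adj u v := ∃ e ∈ S, e.val = {u, v}
  symm := ⟨fun u v ⟨e, he, huv⟩ => ⟨e, he, huv.trans (pair_comm u v)⟩⟩
  loopless := ⟨fun u ⟨e, _, hu⟩ => by simpa [hu] using e.2⟩

theorem edgeGraph_adj {n : ℕ} {S : Finset (GEdge n)} {u v : Fin n} :
    (edgeGraph S).Adj u v ↔ ∃ e ∈ S, e.val = {u, v} :=
  Iff.rfl

theorem threeColorable_of_colorable {n : ℕ} {S : Finset (GEdge n)}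
    (h : (edgeGraph S).Colorable 3) : ThreeColorable n S := by
  obtain ⟨C⟩ := h
  refine ⟨C, fun e he u hu v hv huv => C.valid (G := edgeGraph S) ⟨e, he, ?_⟩⟩
  exact (eq_of_subset_of_card_le (by simp [insert_subset_iff, hu, hv])
    (by rw [e.2, card_pair huv])).symm

theorem isChordedCycle_edgeGraph_iff {n m : ℕ} {S : Finset (GEdge n)} {a : Fin (m + 1) → Fin n}
    {i : Fin (m + 1)} :
    (edgeGraph S).IsChordedCycle a i ↔
      2 ≤ (i : ℕ) ∧ (i : ℕ) < m ∧ ∀ k, ∃ e ∈ S, e.val = chordedCycleEdges a i k := by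
  simp only [SimpleGraph.IsChordedCycle, edgeGraph_adj, Sum.forall, Fin.forall_fin_two,
    chordedCycleEdges, Sum.elim_inl, Sum.elim_inr, Matrix.cons_val_zero, Matrix.cons_val_one]

theorem gprob_isChordedCycle_le {n m : ℕ} {p : ℝ} (hp0 : 0 ≤ p) (a : Fin (m + 1) ↪ Fin n)
    (i : Fin (m + 1)) : gprob n p (fun S => (edgeGraph S).IsChordedCycle a i) ≤ p ^ (m + 2) := by
  by_cases hi : 2 ≤ (i : ℕ) ∧ (i : ℕ) < m
  · have hevent : (fun S => (edgeGraph S).IsChordedCycle a i) =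
        fun S => ∀ k, ∃ e ∈ S, e.val = chordedCycleEdges a i k := by
      ext S
      simp only [isChordedCycle_edgeGraph_iff, hi, true_and]
    rw [hevent, gprob_forall_exists_val_eq (chordedCycleEdges_injective a.injective hi.1 hi.2)
      (card_chordedCycleEdges a.injective hi.1 hi.2)]
    simp
  · rw [gprob_eq_zero fun S h => hi ⟨h.1, h.2.1⟩]
    positivity

theorem exists_isChordedCycle_of_not_threeColorable {n : ℕ} {S : Finset (GEdge n)}
    (h : ¬ ThreeColorable n S) :
    ∃ (m : Fin n) (i : Fin (m + 1)) (a : Fin (m + 1) ↪ Fin n),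
      (edgeGraph S).IsChordedCycle a i := by
  obtain ⟨m, a, i, hcycle⟩ :=
    (edgeGraph S).exists_isChordedCycle_of_not_colorable (mt threeColorable_of_colorable h)
  have hm : m < n := by simpa using Fintype.card_le_of_embedding a
  exact ⟨⟨m, hm⟩, i, a, hcycle⟩

theorem gprob_not_threeColorable_le {n : ℕ} {p : ℝ} (hp0 : 0 ≤ p) (hp1 : p ≤ 1) :
    gprob n p (fun S => ¬ ThreeColorable n S) ≤
      ∑ m ∈ range n, ((m : ℝ) + 1) * (n : ℝ) ^ (m + 1) * p ^ (m + 2) := by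
  calc gprob n p (fun S => ¬ ThreeColorable n S)
      ≤ gprob n p (fun S => ∃ (m : Fin n) (i : Fin (m + 1)) (a : Fin (m + 1) ↪ Fin n),
          (edgeGraph S).IsChordedCycle a i) :=
        gprob_mono hp0 hp1 fun S => exists_isChordedCycle_of_not_threeColorable
    _ ≤ ∑ m : Fin n, ∑ i : Fin (m + 1), ∑ a : Fin (m + 1) ↪ Fin n,
          gprob n p (fun S => (edgeGraph S).IsChordedCycle a i) := by
        refine (gprob_exists_le_sum hp0 hp1 _).trans (sum_le_sum fun m _ => ?_)
        exact (gprob_exists_le_sum hp0 hp1 _).trans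
          (sum_le_sum fun i _ => gprob_exists_le_sum hp0 hp1 _)
    _ ≤ ∑ m : Fin n, ∑ i : Fin (m + 1), ∑ a : Fin (m + 1) ↪ Fin n, p ^ ((m : ℕ) + 2) := by
        gcongr with m _ i _ a _
        exact gprob_isChordedCycle_le hp0 a i
    _ = ∑ m : Fin n, ((m : ℝ) + 1) * (n.descFactorial (m + 1) : ℝ) * p ^ ((m : ℕ) + 2) := by
        simp [Fintype.card_embedding_eq, mul_assoc]
    _ ≤ ∑ m : Fin n, ((m : ℝ) + 1) * (n : ℝ) ^ ((m : ℕ) + 1) * p ^ ((m : ℕ) + 2) := by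
        gcongr
        exact_mod_cast Nat.descFactorial_le_pow n _
    _ = ∑ m ∈ range n, ((m : ℝ) + 1) * (n : ℝ) ^ (m + 1) * p ^ (m + 2) :=
        Fin.sum_univ_eq_sum_range (fun m => ((m : ℝ) + 1) * (n : ℝ) ^ (m + 1) * p ^ (m + 2)) n

theorem sum_range_succ_mul_pow_le {c : ℝ} (hc0 : 0 ≤ c) (hc1 : c < 1) (N : ℕ) :
    ∑ m ∈ range N, ((m : ℝ) + 1) * c ^ m ≤ 1 / (1 - c) ^ 2 := by
  have hsum := hasSum_choose_mul_geometric_of_norm_lt_one 1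
    (by rwa [Real.norm_eq_abs, abs_of_nonneg hc0] : ‖c‖ < 1)
  simpa using sum_le_hasSum (range N) (fun m _ => by positivity) hsum

theorem div_natCast_le_one {c : ℝ} (hc0 : 0 ≤ c) (hc1 : c ≤ 1) (n : ℕ) : c / n ≤ 1 := by
  rcases n.eq_zero_or_pos with rfl | hn
  · simp
  · exact (div_le_self hc0 (by exact_mod_cast hn)).trans hc1

theorem gprob_not_threeColorable_le_div {c : ℝ} (hc0 : 0 ≤ c) (hc1 : c < 1) (n : ℕ) :
    gprob n (c / n) (fun S => ¬ ThreeColorable n S) ≤ c ^ 2 / (1 - c) ^ 2 / n := by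
  have hterm : ∀ m : ℕ, ((m : ℝ) + 1) * (n : ℝ) ^ (m + 1) * (c / n) ^ (m + 2) =
      ((m : ℝ) + 1) * c ^ m * (c ^ 2 / n) := by
    intro m
    rcases eq_or_ne (n : ℝ) 0 with hn | hn
    · simp [hn]
    · rw [div_pow, pow_add c m 2, pow_succ (n : ℝ) (m + 1)]
      field_simp
  calc gprob n (c / n) (fun S => ¬ ThreeColorable n S)
      ≤ (∑ m ∈ range n, ((m : ℝ) + 1) * c ^ m) * (c ^ 2 / n) := by
        simpa only [hterm, sum_mul] using
          gprob_not_threeColorable_le (n := n) (by positivity) (div_natCast_le_one hc0 hc1.le n)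
    _ ≤ 1 / (1 - c) ^ 2 * (c ^ 2 / n) := by
        gcongr
        exact sum_range_succ_mul_pow_le hc0 hc1 n
    _ = c ^ 2 / (1 - c) ^ 2 / n := by ring

/-- Subcritical 3-colorability: for every constant `0 < c < 1`, with `p = c/n` the
probability that `G(n,p)` is 3-colorable tends to `1`. -/
theorem subcritical_three_colorability (c : ℝ) (hc0 : 0 < c) (hc1 : c < 1) :
    Tendsto (fun n : ℕ => gprob n (c / n) (ThreeColorable n)) atTop (nhds 1) := by
  have hbad : Tendsto (fun n : ℕ => gprob n (c / n) (fun S => ¬ ThreeColorable n S)) atTop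
      (nhds 0) :=
    squeeze_zero (fun n => gprob_nonneg (by positivity) (div_natCast_le_one hc0.le hc1.le n) _)
      (gprob_not_threeColorable_le_div hc0.le hc1)
      (tendsto_const_div_atTop_nhds_zero_nat _)
  simpa [gprob_not] using hbad.const_sub 1
end
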